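/- arXiv:2111.01250 — 6 statements merged into one kernel-verified Lean document; each statement's English description precedes it below -/
import Mathlib

section
/- Let P be a finitely additive probability premeasure on a premeasurable space X and let f : X → [0,1] be premeasurable. Then sup{J_P(s) | s simple, s ≤ f} = inf{J_P(t) | t simple, t ≥ f}. -/
open Set

variable {X : Type*}

/-- An algebra of subsets of `X`: contains `univ`, closed under complements and
finite intersections. -/
structure IsSetAlg (B : Set (Set X)) : Prop where
  univ_mem : Set.univ ∈ B
  compl_mem : ∀ A ∈ B, Aᶜ ∈ B
  inter_mem : ∀ A ∈ B, ∀ C ∈ B, A ∩ C ∈ B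

/-- The value of the simple function `∑ k, a k • 1_{A k}`. -/
noncomputable def simpleVal {n : ℕ} (a : Fin n → ℝ) (A : Fin n → Set X) : X → ℝ :=
  fun x => ∑ k, a k * (A k).indicator (fun _ => (1 : ℝ)) x

/-- `(a, A)` is a representation of `s` as a simple function for the algebra `B`. -/
def IsRepOf (B : Set (Set X)) (s : X → ℝ) {n : ℕ}
    (a : Fin n → ℝ) (A : Fin n → Set X) : Prop :=
  (∀ k, a k ∈ Set.Icc (0 : ℝ) 1) ∧ (∀ k, A k ∈ B) ∧ s = simpleVal a A

/-- A simple function on the premeasurable space `(X, B)`. -/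
def IsSimple (B : Set (Set X)) (s : X → ℝ) : Prop :=
  ∃ (n : ℕ) (a : Fin n → ℝ) (A : Fin n → Set X), IsRepOf B s a A

/-- The elementary integral of a simple function given by a representation. -/
def JRep (P : Set X → ℝ) {n : ℕ} (a : Fin n → ℝ) (A : Fin n → Set X) : ℝ :=
  ∑ k, a k * P (A k)

/-- Membership in the algebra of sets generated by `S`. -/
inductive InGenAlg (S : Set (Set ℝ)) : Set ℝ → Prop
  | basic : ∀ s ∈ S, InGenAlg S s
  | univ : InGenAlg S Set.univ
  | compl : ∀ s, InGenAlg S s → InGenAlg S sᶜ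
  | inter : ∀ s t, InGenAlg S s → InGenAlg S t → InGenAlg S (s ∩ t)

/-- A premeasurable map `X → [0,1]`: preimages of sets in the algebra generated
by open intervals lie in `B`. -/
def PreMble (B : Set (Set X)) (f : X → ℝ) : Prop :=
  (∀ x, f x ∈ Set.Icc (0 : ℝ) 1) ∧
  ∀ T : Set ℝ, InGenAlg {I | ∃ a b : ℝ, I = Set.Ioo a b} T → f ⁻¹' T ∈ B

/-- A finitely additive probability premeasure on the algebra `B`. -/
structure IsFinAddProb (B : Set (Set X)) (P : Set X → ℝ) : Prop where
  mem_Icc : ∀ A ∈ B, P A ∈ Set.Icc (0 : ℝ) 1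
  univ_one : P Set.univ = 1
  add : ∀ A ∈ B, ∀ C ∈ B, Disjoint A C → P (A ∪ C) = P A + P C

/-- A (countably additive) probability premeasure on the algebra `B`. -/
structure IsProbPre (B : Set (Set X)) (P : Set X → ℝ) : Prop where
  mem_Icc : ∀ A ∈ B, P A ∈ Set.Icc (0 : ℝ) 1
  univ_one : P Set.univ = 1
  countably_add : ∀ A : ℕ → Set X, (∀ n, A n ∈ B) →
    (∀ m n, m ≠ n → Disjoint (A m) (A n)) → (⋃ n, A n) ∈ B →
    HasSum (fun n => P (A n)) (P (⋃ n, A n))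

/-- `I_P f`: the supremum of elementary integrals of simple functions below `f`. -/
noncomputable def Ilow (B : Set (Set X)) (P : Set X → ℝ) (f : X → ℝ) : ℝ :=
  sSup {r | ∃ (n : ℕ) (a : Fin n → ℝ) (A : Fin n → Set X),
    (∀ k, a k ∈ Set.Icc (0 : ℝ) 1) ∧ (∀ k, A k ∈ B) ∧
    (∀ x, simpleVal a A x ≤ f x) ∧ r = JRep P a A}

namespace SIA

variable {X : Type*} {B : Set (Set X)} {P : Set X → ℝ}

lemma empty_mem (hB : IsSetAlg B) : (∅ : Set X) ∈ B := by
  simpa using hB.compl_mem _ hB.univ_mem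

lemma P_empty (hB : IsSetAlg B) (hP : IsFinAddProb B P) : P (∅ : Set X) = 0 := by
  have h := hP.add ∅ (empty_mem hB) ∅ (empty_mem hB) (by simp)
  simp at h
  linarith

lemma P_nonneg (hP : IsFinAddProb B P) {A : Set X} (hA : A ∈ B) : 0 ≤ P A :=
  (hP.mem_Icc A hA).1

lemma biUnion_mem (hB : IsSetAlg B) {ι : Type*} [DecidableEq ι] (s : Finset ι) (A : ι → Set X)
    (h : ∀ i ∈ s, A i ∈ B) : (⋃ i ∈ s, A i) ∈ B := by
  classical
  induction s using Finset.induction_on with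
  | empty => simpa using empty_mem hB
  | @insert a s ha ih =>
    rw [Finset.set_biUnion_insert]
    have h1 : A a ∈ B := h a (Finset.mem_insert_self a s)
    have h2 : (⋃ i ∈ s, A i) ∈ B := ih fun i hi => h i (Finset.mem_insert_of_mem hi)
    have := hB.compl_mem _ (hB.inter_mem _ (hB.compl_mem _ h1) _ (hB.compl_mem _ h2))
    simpa [Set.compl_inter] using this

lemma P_biUnion (hB : IsSetAlg B) (hP : IsFinAddProb B P) {ι : Type*} [DecidableEq ι]
    (s : Finset ι) (A : ι → Set X)
    (h : ∀ i ∈ s, A i ∈ B) (hd : Set.Pairwise s (Function.onFun Disjoint A)) :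
    P (⋃ i ∈ s, A i) = ∑ i ∈ s, P (A i) := by
  classical
  induction s using Finset.induction_on with
  | empty => simp [P_empty hB hP]
  | @insert a s ha ih =>
    rw [Finset.set_biUnion_insert, Finset.sum_insert ha]
    have h1 : A a ∈ B := h a (Finset.mem_insert_self a s)
    have h2 : (⋃ i ∈ s, A i) ∈ B :=
      biUnion_mem hB s A fun i hi => h i (Finset.mem_insert_of_mem hi)
    have hdis : Disjoint (A a) (⋃ i ∈ s, A i) := by
      rw [Set.disjoint_iUnion₂_right]
      intro i hi
      exact hd (Finset.mem_insert_self a s) (Finset.mem_insert_of_mem hi)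
        (fun he => ha (he ▸ hi))
    rw [hP.add _ h1 _ h2 hdis,
      ih (fun i hi => h i (Finset.mem_insert_of_mem hi))
        (hd.mono (Finset.subset_insert a s))]

lemma iInter_mem (hB : IsSetAlg B) : ∀ (N : ℕ) (C : Fin N → Set X),
    (∀ i, C i ∈ B) → (⋂ i, C i) ∈ B := by
  intro N
  induction N with
  | zero => intro C h; simpa using hB.univ_mem
  | succ n ih =>
    intro C h
    have : (⋂ i, C i) = C 0 ∩ ⋂ i : Fin n, C i.succ := by
      ext x; simp [Set.mem_iInter, Fin.forall_fin_succ]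
    rw [this]
    exact hB.inter_mem _ (h 0) _ (ih _ fun i => h i.succ)

/-- The atom corresponding to a sign pattern `σ`. -/
def atom {N : ℕ} (D : Fin N → Set X) (σ : Fin N → Bool) : Set X :=
  ⋂ i, if σ i then D i else (D i)ᶜ

lemma mem_atom {N : ℕ} {D : Fin N → Set X} {σ : Fin N → Bool} {x : X} :
    x ∈ atom D σ ↔ ∀ i, (x ∈ D i ↔ σ i = true) := by
  simp only [atom, Set.mem_iInter]
  apply forall_congr'
  intro i
  cases hσ : σ i <;> simp [hσ]

lemma atom_mem (hB : IsSetAlg B) {N : ℕ} {D : Fin N → Set X} (hD : ∀ i, D i ∈ B)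
    (σ : Fin N → Bool) : atom D σ ∈ B := by
  apply iInter_mem hB
  intro i
  cases hσ : σ i <;> simp [hσ]
  · exact hB.compl_mem _ (hD i)
  · exact hD i

lemma atom_disjoint {N : ℕ} (D : Fin N → Set X) {σ τ : Fin N → Bool} (h : σ ≠ τ) :
    Disjoint (atom D σ) (atom D τ) := by
  rw [Set.disjoint_left]
  intro x hx hx'
  apply h
  funext i
  have h1 := mem_atom.mp hx i
  have h2 := mem_atom.mp hx' i
  by_cases hxD : x ∈ D i
  · rw [h1.mp hxD, h2.mp hxD]
  · cases hσ : σ i <;> cases hτ : τ i <;> simp_all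

lemma biUnion_atom {N : ℕ} (D : Fin N → Set X) (k : Fin N) :
    (⋃ σ ∈ Finset.univ.filter (fun σ : Fin N → Bool => σ k = true), atom D σ) = D k := by
  classical
  ext x
  simp only [Set.mem_iUnion, Finset.mem_filter, Finset.mem_univ, true_and, exists_prop]
  constructor
  · rintro ⟨σ, hσk, hx⟩
    exact (mem_atom.mp hx k).mpr hσk
  · intro hx
    exact ⟨fun i => decide (x ∈ D i), by simp [hx], mem_atom.mpr fun i => by simp⟩

lemma P_eq_sum_atoms (hB : IsSetAlg B) (hP : IsFinAddProb B P) {N : ℕ}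
    {D : Fin N → Set X} (hD : ∀ i, D i ∈ B) (k : Fin N) :
    P (D k) = ∑ σ ∈ Finset.univ.filter (fun σ : Fin N → Bool => σ k = true), P (atom D σ) := by
  classical
  rw [← biUnion_atom D k, P_biUnion hB hP _ _ (fun σ _ => atom_mem hB hD σ)
    (fun σ _ τ _ hne => atom_disjoint D hne)]

lemma JRep_eq_sum_atoms (hB : IsSetAlg B) (hP : IsFinAddProb B P) {n N : ℕ}
    (a : Fin n → ℝ) (A : Fin n → Set X)
    {D : Fin N → Set X} (hD : ∀ i, D i ∈ B) (e : Fin n → Fin N) (he : ∀ k, D (e k) = A k) :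
    JRep P a A = ∑ σ : Fin N → Bool, (∑ k, if σ (e k) then a k else 0) * P (atom D σ) := by
  classical
  unfold JRep
  have step : ∀ k, a k * P (A k) = ∑ σ : Fin N → Bool,
      (if σ (e k) then a k * P (atom D σ) else 0) := by
    intro k
    rw [← he k, P_eq_sum_atoms hB hP hD (e k), Finset.mul_sum, Finset.sum_filter]
  simp only [step]
  rw [Finset.sum_comm]
  apply Finset.sum_congr rfl
  intro σ _
  rw [Finset.sum_mul]
  apply Finset.sum_congr rfl
  intro k _
  by_cases h : σ (e k) = true <;> simp [h]

lemma simpleVal_on_atom {n N : ℕ} (a : Fin n → ℝ) (A : Fin n → Set X)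
    {D : Fin N → Set X} (e : Fin n → Fin N) (he : ∀ k, D (e k) = A k)
    {σ : Fin N → Bool} {x : X} (hx : x ∈ atom D σ) :
    simpleVal a A x = ∑ k, if σ (e k) then a k else 0 := by
  unfold simpleVal
  apply Finset.sum_congr rfl
  intro k _
  have hk := mem_atom.mp hx (e k)
  rw [he k] at hk
  by_cases hxA : x ∈ A k
  · simp [Set.indicator_of_mem hxA, hk.mp hxA]
  · have : σ (e k) = false := by
      cases hσ : σ (e k)
      · rfl
      · exact absurd (hk.mpr hσ) hxA
    simp [Set.indicator_of_notMem hxA, this]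

lemma JRep_mono (hB : IsSetAlg B) (hP : IsFinAddProb B P) {n m : ℕ}
    (a : Fin n → ℝ) (A : Fin n → Set X) (b : Fin m → ℝ) (C : Fin m → Set X)
    (hA : ∀ k, A k ∈ B) (hC : ∀ k, C k ∈ B)
    (h : ∀ x, simpleVal a A x ≤ simpleVal b C x) :
    JRep P a A ≤ JRep P b C := by
  classical
  set D : Fin (n + m) → Set X := Fin.append A C with hDdef
  have hD : ∀ i, D i ∈ B := by
    intro i
    induction i using Fin.addCases with
    | left i => simpa [hDdef, Fin.append_left] using hA i
    | right i => simpa [hDdef, Fin.append_right] using hC i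
  have heA : ∀ k, D (Fin.castAdd m k) = A k := fun k => Fin.append_left A C k
  have heC : ∀ k, D (Fin.natAdd n k) = C k := fun k => Fin.append_right A C k
  rw [JRep_eq_sum_atoms hB hP a A hD (Fin.castAdd m) heA,
      JRep_eq_sum_atoms hB hP b C hD (Fin.natAdd n) heC]
  apply Finset.sum_le_sum
  intro σ _
  by_cases hne : (atom D σ).Nonempty
  · obtain ⟨x, hx⟩ := hne
    rw [← simpleVal_on_atom a A (Fin.castAdd m) heA hx,
        ← simpleVal_on_atom b C (Fin.natAdd n) heC hx]
    exact mul_le_mul_of_nonneg_right (h x) (P_nonneg hP (atom_mem hB hD σ))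
  · rw [Set.not_nonempty_iff_eq_empty.mp hne, P_empty hB hP, mul_zero, mul_zero]

end SIA
namespace SIA

variable {X : Type*} {B : Set (Set X)} {P : Set X → ℝ}

lemma preimage_lt_mem (hB : IsSetAlg B) {f : X → ℝ} (hf : PreMble B f) (c : ℝ) :
    {x | f x < c} ∈ B := by
  have h1 : f ⁻¹' Set.Ioo (-1) c ∈ B := hf.2 _ (InGenAlg.basic _ ⟨-1, c, rfl⟩)
  have heq : {x | f x < c} = f ⁻¹' Set.Ioo (-1) c := by
    ext x
    simp only [Set.mem_setOf_eq, Set.mem_preimage, Set.mem_Ioo]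
    constructor
    · intro h
      exact ⟨lt_of_lt_of_le (by norm_num) (hf.1 x).1, h⟩
    · exact fun h => h.2
  rw [heq]; exact h1

lemma simpleVal_eq_of_mem {n : ℕ} (a : Fin n → ℝ) (A : Fin n → Set X)
    (hd : ∀ j k : Fin n, j ≠ k → Disjoint (A j) (A k)) {x : X} {k0 : Fin n}
    (hx : x ∈ A k0) : simpleVal a A x = a k0 := by
  unfold simpleVal
  rw [Finset.sum_eq_single k0]
  · simp [Set.indicator_of_mem hx]
  · intro j _ hj
    have hxj : x ∉ A j := fun hxj => (Set.disjoint_left.mp (hd j k0 hj) hxj) hx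
    simp [Set.indicator_of_notMem hxj]
  · simp

lemma sandwich (hB : IsSetAlg B) (hP : IsFinAddProb B P) {f : X → ℝ} (hf : PreMble B f)
    (m : ℕ) (hm : 0 < m) :
    ∃ (a c : Fin (m + 1) → ℝ) (E : Fin (m + 1) → Set X),
      (∀ k, a k ∈ Set.Icc (0 : ℝ) 1) ∧ (∀ k, c k ∈ Set.Icc (0 : ℝ) 1) ∧
      (∀ k, E k ∈ B) ∧
      (∀ x, simpleVal a E x ≤ f x) ∧ (∀ x, f x ≤ simpleVal c E x) ∧
      JRep P c E ≤ JRep P a E + 1 / m := by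
  classical
  have hm' : (0 : ℝ) < m := by exact_mod_cast hm
  set E : Fin (m + 1) → Set X :=
    fun k => {x | (k : ℝ) / m ≤ f x ∧ f x < ((k : ℝ) + 1) / m} with hEdef
  set a : Fin (m + 1) → ℝ := fun k => (k : ℝ) / m with hadef
  set c : Fin (m + 1) → ℝ := fun k => min (((k : ℝ) + 1) / m) 1 with hcdef
  -- membership of E k in B
  have hEB : ∀ k, E k ∈ B := by
    intro k
    have h1 : {x | f x < ((k : ℝ) + 1) / m} ∈ B := preimage_lt_mem hB hf _
    have h2 : {x | f x < (k : ℝ) / m} ∈ B := preimage_lt_mem hB hf _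
    have heq : E k = {x | f x < ((k : ℝ) + 1) / m} ∩ {x | f x < (k : ℝ) / m}ᶜ := by
      ext x
      simp only [hEdef, Set.mem_setOf_eq, Set.mem_inter_iff, Set.mem_compl_iff, not_lt]
      tauto
    rw [heq]
    exact hB.inter_mem _ h1 _ (hB.compl_mem _ h2)
  -- disjointness
  have key : ∀ j k : Fin (m + 1), (j : ℕ) < (k : ℕ) → Disjoint (E j) (E k) := by
    intro j k h
    rw [Set.disjoint_left]
    intro x hxj hxk
    simp only [hEdef, Set.mem_setOf_eq] at hxj hxk
    have h1 : ((j : ℕ) : ℝ) + 1 ≤ ((k : ℕ) : ℝ) := by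
      exact_mod_cast Nat.succ_le_of_lt h
    have h2 : (((j : ℕ) : ℝ) + 1) / m ≤ ((k : ℕ) : ℝ) / m := by gcongr
    linarith [hxj.2, hxk.1]
  have hEd : ∀ j k : Fin (m + 1), j ≠ k → Disjoint (E j) (E k) := by
    intro j k hjk
    rcases Nat.lt_or_ge (j : ℕ) (k : ℕ) with h | h
    · exact key j k h
    · have hlt : (k : ℕ) < (j : ℕ) :=
        lt_of_le_of_ne h (fun he => hjk (Fin.ext he.symm))
      exact (key k j hlt).symm
  -- each x belongs to some E k
  have hmem : ∀ x : X, ∃ k : Fin (m + 1), x ∈ E k := by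
    intro x
    have hf0 : (0 : ℝ) ≤ f x := (hf.1 x).1
    have hf1 : f x ≤ 1 := (hf.1 x).2
    obtain ⟨k0, hk0le, hlow, hhigh⟩ :
        ∃ k0 : ℕ, k0 ≤ m ∧ (k0 : ℝ) ≤ (m : ℝ) * f x ∧ (m : ℝ) * f x < k0 + 1 := by
      refine ⟨⌊(m : ℝ) * f x⌋₊, ?_, Nat.floor_le (by positivity), Nat.lt_floor_add_one _⟩
      have h1 : (m : ℝ) * f x ≤ (m : ℝ) := by nlinarith
      calc ⌊(m : ℝ) * f x⌋₊ ≤ ⌊(m : ℝ)⌋₊ := Nat.floor_le_floor h1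
        _ = m := Nat.floor_natCast m
    refine ⟨⟨k0, Nat.lt_succ_of_le hk0le⟩, ?_, ?_⟩
    · simp only [Fin.val_mk]
      rw [div_le_iff₀ hm']
      linarith [mul_comm (m : ℝ) (f x)]
    · simp only [Fin.val_mk]
      rw [lt_div_iff₀ hm']
      linarith [mul_comm (m : ℝ) (f x)]
  -- the sum of the P (E k) is 1
  have huniv : (⋃ k ∈ (Finset.univ : Finset (Fin (m + 1))), E k) = Set.univ := by
    ext x
    simpa using hmem x
  have hsum : ∑ k, P (E k) = 1 := by
    rw [← P_biUnion hB hP Finset.univ E (fun k _ => hEB k)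
      (fun j _ k _ hjk => hEd j k hjk), huniv, hP.univ_one]
  refine ⟨a, c, E, ?_, ?_, hEB, ?_, ?_, ?_⟩
  · intro k
    constructor
    · positivity
    · rw [div_le_one hm']
      exact_mod_cast Nat.lt_succ_iff.mp k.isLt
  · intro k
    exact ⟨le_min (by positivity) zero_le_one, min_le_right _ _⟩
  · intro x
    obtain ⟨k0, hk0⟩ := hmem x
    rw [simpleVal_eq_of_mem a E hEd hk0]
    exact hk0.1
  · intro x
    obtain ⟨k0, hk0⟩ := hmem x
    rw [simpleVal_eq_of_mem c E hEd hk0]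
    exact le_min (le_of_lt hk0.2) (hf.1 x).2
  · calc JRep P c E = ∑ k, c k * P (E k) := rfl
      _ ≤ ∑ k, (a k * P (E k) + (1 / m) * P (E k)) := by
          apply Finset.sum_le_sum
          intro k _
          have hPk : 0 ≤ P (E k) := P_nonneg hP (hEB k)
          have hck : c k ≤ a k + 1 / m := by
            have : c k ≤ ((k : ℝ) + 1) / m := min_le_left _ _
            rw [hadef]
            rw [add_div] at this
            simpa using this
          nlinarith
      _ = JRep P a E + (1 / m) * ∑ k, P (E k) := by
          rw [Finset.sum_add_distrib, ← Finset.mul_sum]; rfl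
      _ = JRep P a E + 1 / m := by rw [hsum, mul_one]

end SIA
/-- For a finitely additive probability premeasure `P` and a
premeasurable `f : X → [0,1]`, the supremum of elementary integrals of simple
functions below `f` equals the infimum over simple functions above `f`. -/
theorem sup_eq_inf_of_premeasurable (B : Set (Set X)) (hB : IsSetAlg B)
    (P : Set X → ℝ) (hP : IsFinAddProb B P)
    (f : X → ℝ) (hf : PreMble B f) :
    sSup {r | ∃ (n : ℕ) (a : Fin n → ℝ) (A : Fin n → Set X),
        (∀ k, a k ∈ Set.Icc (0 : ℝ) 1) ∧ (∀ k, A k ∈ B) ∧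
        (∀ x, simpleVal a A x ≤ f x) ∧ r = JRep P a A} =
    sInf {r | ∃ (n : ℕ) (a : Fin n → ℝ) (A : Fin n → Set X),
        (∀ k, a k ∈ Set.Icc (0 : ℝ) 1) ∧ (∀ k, A k ∈ B) ∧
        (∀ x, f x ≤ simpleVal a A x) ∧ r = JRep P a A} := by
  classical
  set S := {r | ∃ (n : ℕ) (a : Fin n → ℝ) (A : Fin n → Set X),
        (∀ k, a k ∈ Set.Icc (0 : ℝ) 1) ∧ (∀ k, A k ∈ B) ∧
        (∀ x, simpleVal a A x ≤ f x) ∧ r = JRep P a A} with hSdef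
  set T := {r | ∃ (n : ℕ) (a : Fin n → ℝ) (A : Fin n → Set X),
        (∀ k, a k ∈ Set.Icc (0 : ℝ) 1) ∧ (∀ k, A k ∈ B) ∧
        (∀ x, f x ≤ simpleVal a A x) ∧ r = JRep P a A} with hTdef
  have hS0 : (0 : ℝ) ∈ S := by
    refine ⟨0, Fin.elim0, Fin.elim0, fun k => k.elim0, fun k => k.elim0, ?_, ?_⟩
    · intro x
      simpa [simpleVal] using (hf.1 x).1
    · simp [JRep]
  have hT1 : (1 : ℝ) ∈ T := by
    refine ⟨1, fun _ => 1, fun _ => Set.univ, fun k => ⟨zero_le_one, le_refl 1⟩,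
      fun k => hB.univ_mem, ?_, ?_⟩
    · intro x
      simpa [simpleVal] using (hf.1 x).2
    · simp [JRep, hP.univ_one]
  have key : ∀ r ∈ S, ∀ r' ∈ T, r ≤ r' := by
    rintro r ⟨n, a, A, ha, hA, hle, rfl⟩ r' ⟨m, b, C, hb, hC, hge, rfl⟩
    exact SIA.JRep_mono hB hP a A b C hA hC fun x => (hle x).trans (hge x)
  have hbddS : BddAbove S := ⟨1, fun r hr => key r hr 1 hT1⟩
  have hbddT : BddBelow T := ⟨0, fun r' hr' => key 0 hS0 r' hr'⟩
  apply le_antisymm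
  · exact csSup_le ⟨0, hS0⟩ fun r hr => le_csInf ⟨1, hT1⟩ fun r' hr' => key r hr r' hr'
  · apply le_of_forall_pos_le_add
    intro ε hε
    obtain ⟨n, hn⟩ := exists_nat_one_div_lt hε
    obtain ⟨a, c, E, ha, hc, hE, hle, hge, hJ⟩ :=
      SIA.sandwich hB hP hf (n + 1) (Nat.succ_pos n)
    have hrS : JRep P a E ∈ S := ⟨n + 2, a, E, ha, hE, hle, rfl⟩
    have hrT : JRep P c E ∈ T := ⟨n + 2, c, E, hc, hE, hge, rfl⟩
    calc sInf T ≤ JRep P c E := csInf_le hbddT hrT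
      _ ≤ JRep P a E + 1 / ((n : ℝ) + 1) := by push_cast at hJ ⊢; linarith
      _ ≤ sSup S + ε := by
          have := le_csSup hbddS hrS
          have hn' : (1 : ℝ) / (n + 1) ≤ ε := le_of_lt (by exact_mod_cast hn)
          linarith
end

section
/- Let P be a finitely additive probability premeasure on a premeasurable space X. Define I_P(f) = sup{J_P(s) | s simple, s ≤ f} for premeasurable f : X → [0,1]. If f, g : X → [0,1] are premeasurable and f + g is also a premeasurable map into [0,1], then I_P(f+g) = I_P(f) + I_P(g). -/
open Set

variable {X : Type*}

section Aux

variable {B : Set (Set X)} {P : Set X → ℝ}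

lemma alg_union (hB : IsSetAlg B) {A C : Set X} (hA : A ∈ B) (hC : C ∈ B) :
    A ∪ C ∈ B := by
  have := hB.compl_mem _ (hB.inter_mem _ (hB.compl_mem _ hA) _ (hB.compl_mem _ hC))
  simpa [Set.compl_inter] using this

lemma alg_empty (hB : IsSetAlg B) : (∅ : Set X) ∈ B := by
  simpa using hB.compl_mem _ hB.univ_mem

lemma alg_iInter (hB : IsSetAlg B) : ∀ {n : ℕ} {S : Fin n → Set X},
    (∀ k, S k ∈ B) → (⋂ k, S k) ∈ B := by
  intro n
  induction n with
  | zero => intro S _; simpa using hB.univ_mem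
  | succ m ih =>
      intro S hS
      have : (⋂ k, S k) = S 0 ∩ ⋂ i : Fin m, S i.succ := by
        ext x; simp [Set.mem_iInter, Fin.forall_fin_succ]
      rw [this]
      exact hB.inter_mem _ (hS 0) _ (ih fun i => hS i.succ)

lemma P_empty (hB : IsSetAlg B) (hP : IsFinAddProb B P) : P ∅ = 0 := by
  have h := hP.add ∅ (alg_empty hB) ∅ (alg_empty hB) (by simp)
  simp at h; linarith

lemma P_nonneg (hP : IsFinAddProb B P) {A : Set X} (hA : A ∈ B) : 0 ≤ P A :=
  (hP.mem_Icc A hA).1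

lemma P_biUnion (hB : IsSetAlg B) (hP : IsFinAddProb B P) {ι : Type*} [DecidableEq ι]
    (F : Finset ι) (S : ι → Set X) (hS : ∀ i ∈ F, S i ∈ B)
    (hd : ∀ i ∈ F, ∀ j ∈ F, i ≠ j → Disjoint (S i) (S j)) :
    (⋃ i ∈ F, S i) ∈ B ∧ P (⋃ i ∈ F, S i) = ∑ i ∈ F, P (S i) := by
  induction F using Finset.induction_on with
  | empty => simpa using ⟨alg_empty hB, P_empty hB hP⟩
  | @insert a F ha ih =>
      have hSF : ∀ i ∈ F, S i ∈ B := fun i hi => hS i (Finset.mem_insert_of_mem hi)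
      have hdF : ∀ i ∈ F, ∀ j ∈ F, i ≠ j → Disjoint (S i) (S j) := fun i hi j hj =>
        hd i (Finset.mem_insert_of_mem hi) j (Finset.mem_insert_of_mem hj)
      obtain ⟨hmem, hsum⟩ := ih hSF hdF
      have hSa : S a ∈ B := hS a (Finset.mem_insert_self a F)
      have hdisj : Disjoint (S a) (⋃ i ∈ F, S i) := by
        simp only [Set.disjoint_iUnion_right]
        intro i hi
        exact hd a (Finset.mem_insert_self a F) i (Finset.mem_insert_of_mem hi)
          (fun h => ha (h ▸ hi))
      rw [Finset.set_biUnion_insert]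
      refine ⟨alg_union hB hSa hmem, ?_⟩
      rw [hP.add _ hSa _ hmem hdisj, hsum, Finset.sum_insert ha]

/-- The atom of the family `D` with signature `σ`. -/
def Atom {N : ℕ} (D : Fin N → Set X) (σ : Fin N → Bool) : Set X :=
  {x | ∀ k, x ∈ D k ↔ σ k = true}

/-- The signature of the atom containing `x`. -/
noncomputable def sigOf {N : ℕ} (D : Fin N → Set X) (x : X) : Fin N → Bool :=
  fun k => @decide (x ∈ D k) (Classical.dec _)

lemma mem_Atom_sigOf {N : ℕ} (D : Fin N → Set X) (x : X) : x ∈ Atom D (sigOf D x) := by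
  intro k; simp only [sigOf, decide_eq_true_eq]

lemma eq_sigOf_of_mem_Atom {N : ℕ} {D : Fin N → Set X} {σ : Fin N → Bool} {x : X}
    (hx : x ∈ Atom D σ) : σ = sigOf D x := by
  funext k
  have h := hx k
  by_cases hm : x ∈ D k
  · simp [sigOf, hm, h.1 hm]
  · have hσ : σ k = false := by
      cases hc : σ k
      · rfl
      · exact absurd (h.2 hc) hm
    simp [sigOf, hm, hσ]

lemma Atom_mem (hB : IsSetAlg B) {N : ℕ} {D : Fin N → Set X} (hD : ∀ k, D k ∈ B)
    (σ : Fin N → Bool) : Atom D σ ∈ B := by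
  have : Atom D σ = ⋂ k, (if σ k then D k else (D k)ᶜ) := by
    ext x
    simp only [Atom, Set.mem_setOf_eq, Set.mem_iInter]
    constructor
    · intro h k
      by_cases hσ : σ k = true
      · simp [hσ, (h k).2 hσ]
      · simp only [Bool.not_eq_true] at hσ
        simp [hσ]
        intro hc
        simp [(h k).1 hc] at hσ
    · intro h k
      by_cases hσ : σ k = true
      · have := h k; simp [hσ] at this; simp [hσ, this]
      · simp only [Bool.not_eq_true] at hσ
        have := h k; simp [hσ] at this; simp [hσ, this]
  rw [this]
  refine alg_iInter hB fun k => ?_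
  by_cases hσ : σ k = true <;> simp [hσ]
  · exact hD k
  · exact hB.compl_mem _ (hD k)

lemma Atom_disjoint {N : ℕ} (D : Fin N → Set X) {σ τ : Fin N → Bool} (h : σ ≠ τ) :
    Disjoint (Atom D σ) (Atom D τ) := by
  rw [Set.disjoint_left]
  intro x hσ hτ
  exact h ((eq_sigOf_of_mem_Atom hσ).trans (eq_sigOf_of_mem_Atom hτ).symm)

lemma sum_P_Atom (hB : IsSetAlg B) (hP : IsFinAddProb B P) {N : ℕ}
    {D : Fin N → Set X} (hD : ∀ k, D k ∈ B) :
    ∑ σ : Fin N → Bool, P (Atom D σ) = 1 := by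
  obtain ⟨hmem, hsum⟩ := P_biUnion hB hP Finset.univ (Atom D)
    (fun σ _ => Atom_mem hB hD σ) (fun σ _ τ _ hστ => Atom_disjoint D hστ)
  have huniv : (⋃ σ ∈ Finset.univ, Atom D σ) = (Set.univ : Set X) := by
    ext x
    simp only [Set.mem_iUnion, Set.mem_univ, iff_true, Finset.mem_univ, exists_true_left]
    exact ⟨sigOf D x, mem_Atom_sigOf D x⟩
  rw [huniv] at hsum
  rw [← hsum, hP.univ_one]

lemma P_eq_sum_Atom (hB : IsSetAlg B) (hP : IsFinAddProb B P) {N : ℕ}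
    {D : Fin N → Set X} (hD : ∀ k, D k ∈ B) (k : Fin N) :
    P (D k) = ∑ σ : Fin N → Bool, if σ k then P (Atom D σ) else 0 := by
  classical
  have hDk : D k = ⋃ σ ∈ Finset.univ.filter (fun σ : Fin N → Bool => σ k = true), Atom D σ := by
    ext x
    simp only [Set.mem_iUnion, Finset.mem_filter, Finset.mem_univ, true_and]
    constructor
    · intro hx
      exact ⟨sigOf D x, by simp only [sigOf, decide_eq_true_eq]; exact hx, mem_Atom_sigOf D x⟩
    · rintro ⟨σ, hσk, hxσ⟩
      exact (hxσ k).2 hσk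
  obtain ⟨_, hsum⟩ := P_biUnion hB hP (Finset.univ.filter (fun σ : Fin N → Bool => σ k = true))
    (Atom D) (fun σ _ => Atom_mem hB hD σ) (fun σ _ τ _ hστ => Atom_disjoint D hστ)
  rw [hDk, hsum, Finset.sum_filter]

end Aux
section Aux2

variable {B : Set (Set X)} {P : Set X → ℝ}

/-- The value of the simple function with coefficients `c` on the atom `σ`. -/
def wgt {N : ℕ} (c : Fin N → ℝ) (σ : Fin N → Bool) : ℝ :=
  ∑ k, if σ k then c k else 0

lemma JRep_atoms (hB : IsSetAlg B) (hP : IsFinAddProb B P) {N : ℕ}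
    (c : Fin N → ℝ) {D : Fin N → Set X} (hD : ∀ k, D k ∈ B) :
    JRep P c D = ∑ σ : Fin N → Bool, wgt c σ * P (Atom D σ) := by
  unfold JRep wgt
  calc ∑ k, c k * P (D k)
      = ∑ k, ∑ σ : Fin N → Bool, (if σ k then c k * P (Atom D σ) else 0) := by
        refine Finset.sum_congr rfl fun k _ => ?_
        rw [P_eq_sum_Atom hB hP hD k, Finset.mul_sum]
        exact Finset.sum_congr rfl fun σ _ => by split <;> simp
    _ = ∑ σ : Fin N → Bool, ∑ k, (if σ k then c k else 0) * P (Atom D σ) := by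
        rw [Finset.sum_comm]
        exact Finset.sum_congr rfl fun σ _ => Finset.sum_congr rfl fun k _ => by
          split <;> simp
    _ = ∑ σ : Fin N → Bool, (∑ k, if σ k then c k else 0) * P (Atom D σ) := by
        exact Finset.sum_congr rfl fun σ _ => (Finset.sum_mul ..).symm

lemma simpleVal_atom {N : ℕ} (c : Fin N → ℝ) (D : Fin N → Set X) {σ : Fin N → Bool}
    {x : X} (hx : x ∈ Atom D σ) : simpleVal c D x = wgt c σ := by
  unfold simpleVal wgt
  refine Finset.sum_congr rfl fun k _ => ?_
  by_cases h : x ∈ D k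
  · simp [Set.indicator_of_mem h, (hx k).1 h]
  · have : σ k ≠ true := fun hc => h ((hx k).2 hc)
    simp [Set.indicator_of_notMem h, this]

lemma JRep_mono (hB : IsSetAlg B) (hP : IsFinAddProb B P) {N : ℕ}
    {c c' : Fin N → ℝ} {D : Fin N → Set X} (hD : ∀ k, D k ∈ B)
    (h : ∀ x, simpleVal c D x ≤ simpleVal c' D x) :
    JRep P c D ≤ JRep P c' D := by
  rw [JRep_atoms hB hP c hD, JRep_atoms hB hP c' hD]
  refine Finset.sum_le_sum fun σ _ => ?_
  rcases Set.eq_empty_or_nonempty (Atom D σ) with he | ⟨x, hx⟩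
  · rw [he, P_empty hB hP]; simp
  · have h1 := simpleVal_atom c D hx
    have h2 := simpleVal_atom c' D hx
    exact mul_le_mul_of_nonneg_right (by rw [← h1, ← h2]; exact h x)
      (P_nonneg hP (Atom_mem hB hD σ))

lemma simpleVal_append {n m : ℕ} (a : Fin n → ℝ) (A : Fin n → Set X)
    (b : Fin m → ℝ) (C : Fin m → Set X) (x : X) :
    simpleVal (Fin.append a b) (Fin.append A C) x = simpleVal a A x + simpleVal b C x := by
  unfold simpleVal
  rw [Fin.sum_univ_add]
  congr 1 <;> exact Finset.sum_congr rfl fun k _ => by simp [Fin.append_left, Fin.append_right]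

lemma JRep_append {n m : ℕ} (a : Fin n → ℝ) (A : Fin n → Set X)
    (b : Fin m → ℝ) (C : Fin m → Set X) :
    JRep P (Fin.append a b) (Fin.append A C) = JRep P a A + JRep P b C := by
  unfold JRep
  rw [Fin.sum_univ_add]
  congr 1 <;> exact Finset.sum_congr rfl fun k _ => by simp [Fin.append_left, Fin.append_right]

lemma simpleVal_zero {m : ℕ} (C : Fin m → Set X) (x : X) :
    simpleVal (fun _ => (0:ℝ)) C x = 0 := by simp [simpleVal]

lemma JRep_zero {m : ℕ} (C : Fin m → Set X) :
    JRep P (fun _ => (0:ℝ)) C = 0 := by simp [JRep]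

lemma JRep_le_JRep (hB : IsSetAlg B) (hP : IsFinAddProb B P) {n m : ℕ}
    {a : Fin n → ℝ} {A : Fin n → Set X} {b : Fin m → ℝ} {C : Fin m → Set X}
    (hA : ∀ k, A k ∈ B) (hC : ∀ k, C k ∈ B)
    (h : ∀ x, simpleVal a A x ≤ simpleVal b C x) :
    JRep P a A ≤ JRep P b C := by
  have hD : ∀ k, Fin.append A C k ∈ B := fun k => by
    induction k using Fin.addCases with
    | left i => rw [Fin.append_left]; exact hA i
    | right i => rw [Fin.append_right]; exact hC i
  have h1 : JRep P a A = JRep P (Fin.append a (fun _ => (0:ℝ))) (Fin.append A C) := by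
    rw [JRep_append, JRep_zero, add_zero]
  have h2 : JRep P b C = JRep P (Fin.append (fun _ => (0:ℝ)) b) (Fin.append A C) := by
    rw [JRep_append, JRep_zero, zero_add]
  rw [h1, h2]
  refine JRep_mono hB hP hD fun x => ?_
  rw [simpleVal_append, simpleVal_append, simpleVal_zero, simpleVal_zero,
    add_zero, zero_add]
  exact h x

/-- The set whose supremum defines `Ilow`. -/
def IlowSet (B : Set (Set X)) (P : Set X → ℝ) (f : X → ℝ) : Set ℝ :=
  {r | ∃ (n : ℕ) (a : Fin n → ℝ) (A : Fin n → Set X),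
    (∀ k, a k ∈ Set.Icc (0 : ℝ) 1) ∧ (∀ k, A k ∈ B) ∧
    (∀ x, simpleVal a A x ≤ f x) ∧ r = JRep P a A}

lemma Ilow_eq_sSup (f : X → ℝ) : Ilow B P f = sSup (IlowSet B P f) := rfl

lemma zero_mem_IlowSet {f : X → ℝ} (hf0 : ∀ x, 0 ≤ f x) : (0:ℝ) ∈ IlowSet B P f :=
  ⟨0, Fin.elim0, Fin.elim0, fun k => k.elim0, fun k => k.elim0,
    fun x => by simpa [simpleVal] using hf0 x, by simp [JRep]⟩

lemma IlowSet_le (hB : IsSetAlg B) (hP : IsFinAddProb B P) {f : X → ℝ} (m : ℕ)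
    (hfm : ∀ x, f x ≤ m) : ∀ r ∈ IlowSet B P f, r ≤ m := by
  rintro r ⟨n, a, A, _, hA, hle, rfl⟩
  have := JRep_le_JRep (b := fun _ : Fin m => (1:ℝ)) (C := fun _ : Fin m => (Set.univ : Set X))
    hB hP hA (fun _ => hB.univ_mem) (fun x => by
      simpa [simpleVal] using (hle x).trans (hfm x))
  simpa [JRep, hP.univ_one] using this

lemma bddAbove_IlowSet (hB : IsSetAlg B) (hP : IsFinAddProb B P) {f : X → ℝ} (m : ℕ)
    (hfm : ∀ x, f x ≤ m) : BddAbove (IlowSet B P f) :=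
  ⟨m, fun r hr => IlowSet_le hB hP m hfm r hr⟩

end Aux2
section Aux3

variable {B : Set (Set X)} {P : Set X → ℝ}

lemma genalg_singleton (a : ℝ) :
    InGenAlg {I | ∃ a b : ℝ, I = Set.Ioo a b} {a} := by
  have h1 : InGenAlg {I | ∃ a b : ℝ, I = Set.Ioo a b} (Set.Ioo (a-1) (a+1)) :=
    InGenAlg.basic _ ⟨a-1, a+1, rfl⟩
  have h2 := InGenAlg.compl _ (InGenAlg.basic (S := {I | ∃ a b : ℝ, I = Set.Ioo a b}) _
    ⟨a-1, a, rfl⟩)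
  have h3 := InGenAlg.compl _ (InGenAlg.basic (S := {I | ∃ a b : ℝ, I = Set.Ioo a b}) _
    ⟨a, a+1, rfl⟩)
  have heq : ({a} : Set ℝ) = Set.Ioo (a-1) (a+1) ∩ (Set.Ioo (a-1) a)ᶜ ∩ (Set.Ioo a (a+1))ᶜ := by
    ext x
    constructor
    · intro hx
      rw [Set.mem_singleton_iff] at hx
      subst hx
      refine ⟨⟨⟨by linarith, by linarith⟩, ?_⟩, ?_⟩
      · rw [Set.mem_compl_iff, Set.mem_Ioo]; rintro ⟨_, h⟩; linarith
      · rw [Set.mem_compl_iff, Set.mem_Ioo]; rintro ⟨h, _⟩; linarith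
    · rintro ⟨⟨hx1, hx2⟩, hx3⟩
      rw [Set.mem_Ioo] at hx1
      rw [Set.mem_compl_iff, Set.mem_Ioo] at hx2 hx3
      rw [Set.mem_singleton_iff]
      rcases lt_trichotomy x a with h | h | h
      · exact absurd ⟨hx1.1, h⟩ hx2
      · exact h
      · exact absurd ⟨h, hx1.2⟩ hx3
  rw [heq]
  exact InGenAlg.inter _ _ (InGenAlg.inter _ _ h1 h2) h3

lemma genalg_Ico {a b : ℝ} (hab : a < b) :
    InGenAlg {I | ∃ a b : ℝ, I = Set.Ioo a b} (Set.Ico a b) := by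
  have h1 := genalg_singleton a
  have h2 : InGenAlg {I | ∃ a b : ℝ, I = Set.Ioo a b} (Set.Ioo a b) :=
    InGenAlg.basic _ ⟨a, b, rfl⟩
  have heq : Set.Ico a b = (({a} : Set ℝ)ᶜ ∩ (Set.Ioo a b)ᶜ)ᶜ := by
    ext x
    rw [Set.mem_compl_iff, Set.mem_inter_iff, Set.mem_compl_iff, Set.mem_compl_iff,
      Set.mem_singleton_iff, Set.mem_Ioo, Set.mem_Ico]
    constructor
    · rintro ⟨h1, h2⟩ ⟨h3, h4⟩
      exact h4 ⟨lt_of_le_of_ne h1 (Ne.symm h3), h2⟩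
    · intro h
      by_cases hx : x = a
      · exact ⟨le_of_eq hx.symm, hx ▸ hab⟩
      · have hio : a < x ∧ x < b := by
          by_contra hc
          exact h ⟨hx, hc⟩
        exact ⟨le_of_lt hio.1, hio.2⟩
  rw [heq]
  exact InGenAlg.compl _ (InGenAlg.inter _ _ (InGenAlg.compl _ h1) (InGenAlg.compl _ h2))

/-- The discretization family for `f` at resolution `1/N`. -/
def Efam (f : X → ℝ) (N : ℕ) : Fin (N+1) → Set X :=
  fun k => f ⁻¹' (Set.Ico ((k : ℕ) / N : ℝ) (((k : ℕ) + 1) / N : ℝ))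

lemma Efam_mem {f : X → ℝ} (hf : PreMble B f) {N : ℕ} (hN : 0 < N) (k : Fin (N+1)) :
    Efam f N k ∈ B := by
  refine hf.2 _ (genalg_Ico ?_)
  have hN' : (0:ℝ) < N := by exact_mod_cast hN
  rw [div_lt_div_iff_of_pos_right hN']
  linarith

/-- There is exactly one member of the family containing each point. -/
lemma Efam_exists_unique {f : X → ℝ} (hf : PreMble B f) {N : ℕ} (hN : 0 < N) (x : X) :
    ∃ j : Fin (N+1), x ∈ Efam f N j ∧ (∀ k, k ≠ j → x ∉ Efam f N k) ∧
      ((j : ℕ) : ℝ) / N ≤ f x ∧ f x < (((j : ℕ) : ℝ) + 1) / N := by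
  have hN' : (0:ℝ) < N := by exact_mod_cast hN
  have hfx0 := (hf.1 x).1
  have hfx1 := (hf.1 x).2
  set y : ℝ := (N : ℝ) * f x with hy
  have hy0 : 0 ≤ y := mul_nonneg (le_of_lt hN') hfx0
  have hyN : y ≤ N := by
    calc y ≤ (N:ℝ) * 1 := by apply mul_le_mul_of_nonneg_left hfx1 (le_of_lt hN')
    _ = N := mul_one _
  set j0 : ℕ := (⌊y⌋).toNat with hj0
  have hfl0 : (0:ℤ) ≤ ⌊y⌋ := Int.floor_nonneg.mpr hy0
  have hcast : ((j0 : ℕ) : ℝ) = ((⌊y⌋ : ℤ) : ℝ) := by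
    rw [hj0]; exact_mod_cast congrArg (fun z : ℤ => (z : ℝ)) (Int.toNat_of_nonneg hfl0)
  have hle : ((j0 : ℕ) : ℝ) ≤ y := by rw [hcast]; exact Int.floor_le y
  have hlt : y < ((j0 : ℕ) : ℝ) + 1 := by rw [hcast]; exact Int.lt_floor_add_one y
  have hj0N : j0 ≤ N := by
    have : ((j0:ℕ):ℝ) ≤ (N:ℝ) := le_trans hle hyN
    exact_mod_cast this
  have hmc := mul_comm (f x) ((N:ℝ))
  refine ⟨⟨j0, Nat.lt_succ_of_le hj0N⟩, ?_, ?_, ?_, ?_⟩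
  · show f x ∈ Set.Ico (((j0:ℕ):ℝ)/N) ((((j0:ℕ):ℝ)+1)/N)
    rw [Set.mem_Ico, div_le_iff₀ hN', lt_div_iff₀ hN']
    constructor <;> linarith
  · intro k hk hxk
    rw [Efam, Set.mem_preimage, Set.mem_Ico, div_le_iff₀ hN', lt_div_iff₀ hN'] at hxk
    obtain ⟨hk1, hk2⟩ := hxk
    have e1 : ((k:ℕ):ℝ) < ((j0:ℕ):ℝ) + 1 := by linarith
    have e2 : ((j0:ℕ):ℝ) < ((k:ℕ):ℝ) + 1 := by linarith
    have e1' : (k:ℕ) < j0 + 1 := by exact_mod_cast e1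
    have e2' : j0 < (k:ℕ) + 1 := by exact_mod_cast e2
    apply hk
    apply Fin.ext
    show (k:ℕ) = j0
    omega
  · show ((j0:ℕ):ℝ)/N ≤ f x
    rw [div_le_iff₀ hN']
    linarith
  · show f x < (((j0:ℕ):ℝ)+1)/N
    rw [lt_div_iff₀ hN']
    linarith

end Aux3
section Aux4

variable {B : Set (Set X)} {P : Set X → ℝ}

lemma phi_spec {f : X → ℝ} (hf : PreMble B f) {N : ℕ} (hN : 0 < N) (x : X) :
    simpleVal (fun k : Fin (N+1) => (((k:ℕ):ℝ))/N) (Efam f N) x ≤ f x ∧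
    f x ≤ simpleVal (fun k : Fin (N+1) => (((k:ℕ):ℝ))/N) (Efam f N) x + 1/N := by
  obtain ⟨j, hj, huniq, hle, hlt⟩ := Efam_exists_unique hf hN x
  have hval : simpleVal (fun k : Fin (N+1) => (((k:ℕ):ℝ))/N) (Efam f N) x = ((j:ℕ):ℝ)/N := by
    unfold simpleVal
    rw [Finset.sum_eq_single j]
    · simp [Set.indicator_of_mem hj]
    · intro k _ hk
      rw [Set.indicator_of_notMem (huniq k hk), mul_zero]
    · intro h; exact absurd (Finset.mem_univ _) h
  rw [hval]
  have hsplit : ((((j:ℕ):ℝ))+1)/N = (((j:ℕ):ℝ))/N + 1/N := add_div _ _ _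
  exact ⟨hle, by linarith⟩

end Aux4
/-- `I_P` is additive: if `f`, `g` and `f + g` are premeasurable
maps `X → [0,1]`, then `I_P (f + g) = I_P f + I_P g`. -/
theorem Ilow_add (B : Set (Set X)) (hB : IsSetAlg B)
    (P : Set X → ℝ) (hP : IsFinAddProb B P)
    (f g : X → ℝ) (hf : PreMble B f) (hg : PreMble B g)
    (hfg : PreMble B (fun x => f x + g x)) :
    Ilow B P (fun x => f x + g x) = Ilow B P f + Ilow B P g := by
  have hf0 : ∀ x, 0 ≤ f x := fun x => (hf.1 x).1
  have hg0 : ∀ x, 0 ≤ g x := fun x => (hg.1 x).1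
  have hfg0 : ∀ x, 0 ≤ f x + g x := fun x => (hfg.1 x).1
  have bddf : BddAbove (IlowSet B P f) :=
    bddAbove_IlowSet hB hP 1 (fun x => by simpa using (hf.1 x).2)
  have bddg : BddAbove (IlowSet B P g) :=
    bddAbove_IlowSet hB hP 1 (fun x => by simpa using (hg.1 x).2)
  have bddfg : BddAbove (IlowSet B P (fun x => f x + g x)) :=
    bddAbove_IlowSet hB hP 1 (fun x => by simpa using (hfg.1 x).2)
  have nef : (IlowSet B P f).Nonempty := ⟨0, zero_mem_IlowSet hf0⟩
  have neg' : (IlowSet B P g).Nonempty := ⟨0, zero_mem_IlowSet hg0⟩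
  have nefg : (IlowSet B P (fun x => f x + g x)).Nonempty := ⟨0, zero_mem_IlowSet hfg0⟩
  rw [Ilow_eq_sSup, Ilow_eq_sSup, Ilow_eq_sSup]
  apply le_antisymm
  · -- hard direction
    apply csSup_le nefg
    rintro r ⟨n, a, A, ha, hA, hle, rfl⟩
    refine le_of_forall_pos_le_add fun ε hε => ?_
    obtain ⟨N0, hN0⟩ := exists_nat_one_div_lt hε
    set N := N0 + 1 with hNdef
    have hN : 0 < N := Nat.succ_pos _
    have hN' : (0:ℝ) < N := by exact_mod_cast hN
    set E := Efam f N with hEdef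
    set a' : Fin (N+1) → ℝ := fun k => (((k:ℕ):ℝ))/N with ha'def
    have hE : ∀ k, E k ∈ B := Efam_mem hf hN
    have ha' : ∀ k, a' k ∈ Set.Icc (0:ℝ) 1 := fun k =>
      ⟨div_nonneg (Nat.cast_nonneg _) hN'.le, by
        rw [div_le_one hN']; exact_mod_cast Fin.is_le k⟩
    have hφf : ∀ x, simpleVal a' E x ≤ f x ∧ f x ≤ simpleVal a' E x + 1/N :=
      fun x => phi_spec hf hN x
    have hφmem : JRep P a' E ∈ IlowSet B P f :=
      ⟨N+1, a', E, ha', hE, fun x => (hφf x).1, rfl⟩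
    set D : Fin (n + (N+1)) → Set X := Fin.append A E with hDdef
    have hD : ∀ k, D k ∈ B := fun k => by
      induction k using Fin.addCases with
      | left i => show Fin.append A E _ ∈ B; rw [Fin.append_left]; exact hA i
      | right i => show Fin.append A E _ ∈ B; rw [Fin.append_right]; exact hE i
    set c1 : Fin (n + (N+1)) → ℝ := Fin.append a (fun _ => (0:ℝ)) with hc1def
    set c2 : Fin (n + (N+1)) → ℝ := Fin.append (fun _ => (0:ℝ)) a' with hc2def
    have hs1 : ∀ x, simpleVal c1 D x = simpleVal a A x := fun x => by
      rw [hc1def, hDdef, simpleVal_append, simpleVal_zero, add_zero]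
    have hs2 : ∀ x, simpleVal c2 D x = simpleVal a' E x := fun x => by
      rw [hc2def, hDdef, simpleVal_append, simpleVal_zero, zero_add]
    set v : (Fin (n + (N+1)) → Bool) → ℝ := fun σ => wgt c1 σ - wgt c2 σ with hvdef
    set cA : (Fin (n + (N+1)) → Bool) → ℝ := fun σ => max 0 (min 1 (v σ - 1/N)) with hcAdef
    have hkey : ∀ σ, ∀ x ∈ Atom D σ, v σ - 1/N ≤ g x := by
      intro σ x hx
      have h1 : simpleVal c1 D x = wgt c1 σ := simpleVal_atom c1 D hx
      have h2 : simpleVal c2 D x = wgt c2 σ := simpleVal_atom c2 D hx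
      have h3 : simpleVal a A x ≤ f x + g x := hle x
      have h4 := (hφf x).2
      have h5 := hs1 x
      have h6 := hs2 x
      simp only [hvdef]
      linarith
    have hcA01 : ∀ σ, cA σ ∈ Set.Icc (0:ℝ) 1 :=
      fun σ => ⟨le_max_left _ _, max_le zero_le_one (min_le_left _ _)⟩
    set e := (Fintype.equivFin (Fin (n + (N+1)) → Bool)).symm with hedef
    have htval : ∀ x, simpleVal (cA ∘ e) (Atom D ∘ e) x = cA (sigOf D x) := by
      intro x
      have hre : simpleVal (cA ∘ e) (Atom D ∘ e) x
          = ∑ σ : Fin (n + (N+1)) → Bool, cA σ * (Atom D σ).indicator (fun _ => (1:ℝ)) x := by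
        unfold simpleVal
        exact Fintype.sum_equiv e _ _ (fun i => rfl)
      rw [hre, Finset.sum_eq_single (sigOf D x)]
      · simp [Set.indicator_of_mem (mem_Atom_sigOf D x)]
      · intro σ _ hσ
        rw [Set.indicator_of_notMem (fun hc => hσ (eq_sigOf_of_mem_Atom hc)), mul_zero]
      · intro h; exact absurd (Finset.mem_univ _) h
    have htle : ∀ x, simpleVal (cA ∘ e) (Atom D ∘ e) x ≤ g x := by
      intro x
      rw [htval]
      exact max_le (hg0 x) (le_trans (min_le_right _ _) (hkey _ x (mem_Atom_sigOf D x)))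
    have htmem : JRep P (cA ∘ e) (Atom D ∘ e) ∈ IlowSet B P g :=
      ⟨_, _, _, fun i => hcA01 _, fun i => Atom_mem hB hD _, htle, rfl⟩
    have hJt : JRep P (cA ∘ e) (Atom D ∘ e) = ∑ σ : Fin (n + (N+1)) → Bool, cA σ * P (Atom D σ) := by
      unfold JRep
      exact Fintype.sum_equiv e _ _ (fun i => rfl)
    have hsumP : ∑ σ : Fin (n + (N+1)) → Bool, P (Atom D σ) = 1 := sum_P_Atom hB hP hD
    have hlow : ∑ σ : Fin (n + (N+1)) → Bool, (v σ - 1/N) * P (Atom D σ)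
        ≤ ∑ σ : Fin (n + (N+1)) → Bool, cA σ * P (Atom D σ) := by
      refine Finset.sum_le_sum fun σ _ => ?_
      rcases Set.eq_empty_or_nonempty (Atom D σ) with hemp | ⟨x, hx⟩
      · rw [hemp, P_empty hB hP]; simp
      · have h1 := hkey σ x hx
        have hgle1 : g x ≤ 1 := (hg.1 x).2
        have hkey2 : v σ - 1/N ≤ cA σ := by
          calc v σ - 1/N = min 1 (v σ - 1/N) := (min_eq_right (by linarith)).symm
          _ ≤ cA σ := le_max_right _ _
        exact mul_le_mul_of_nonneg_right hkey2 (P_nonneg hP (Atom_mem hB hD σ))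
    have e1 : JRep P c1 D = ∑ σ : Fin (n + (N+1)) → Bool, wgt c1 σ * P (Atom D σ) :=
      JRep_atoms hB hP c1 hD
    have e2 : JRep P c2 D = ∑ σ : Fin (n + (N+1)) → Bool, wgt c2 σ * P (Atom D σ) :=
      JRep_atoms hB hP c2 hD
    have e3 : JRep P c1 D = JRep P a A := by
      rw [hc1def, hDdef, JRep_append, JRep_zero, add_zero]
    have e4 : JRep P c2 D = JRep P a' E := by
      rw [hc2def, hDdef, JRep_append, JRep_zero, zero_add]
    have hexp : ∑ σ : Fin (n + (N+1)) → Bool, (v σ - 1/N) * P (Atom D σ)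
        = JRep P a A - JRep P a' E - 1/N := by
      have hstep : ∑ σ : Fin (n + (N+1)) → Bool, (v σ - 1/N) * P (Atom D σ)
          = (∑ σ : Fin (n + (N+1)) → Bool, wgt c1 σ * P (Atom D σ))
            - (∑ σ : Fin (n + (N+1)) → Bool, wgt c2 σ * P (Atom D σ))
            - (1/N) * ∑ σ : Fin (n + (N+1)) → Bool, P (Atom D σ) := by
        rw [Finset.mul_sum, ← Finset.sum_sub_distrib, ← Finset.sum_sub_distrib]
        refine Finset.sum_congr rfl fun σ _ => ?_
        simp only [hvdef]
        ring
      rw [hstep, ← e1, ← e2, e3, e4, hsumP, mul_one]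
    have hfinal : JRep P a A ≤ JRep P a' E + JRep P (cA ∘ e) (Atom D ∘ e) + 1/N := by
      rw [hexp] at hlow
      rw [hJt]
      linarith
    have h1 : JRep P a' E ≤ sSup (IlowSet B P f) := le_csSup bddf hφmem
    have h2 : JRep P (cA ∘ e) (Atom D ∘ e) ≤ sSup (IlowSet B P g) := le_csSup bddg htmem
    have hNε : 1/(N:ℝ) < ε := by
      rw [hNdef]
      push_cast
      exact hN0
    linarith
  · -- easy direction
    have hadd : ∀ r ∈ IlowSet B P f, ∀ r' ∈ IlowSet B P g,
        r + r' ∈ IlowSet B P (fun x => f x + g x) := by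
      rintro r ⟨n, a, A, ha, hA, hle, rfl⟩ r' ⟨m, b, C, hb, hC, hle', rfl⟩
      refine ⟨n+m, Fin.append a b, Fin.append A C, ?_, ?_, ?_, (JRep_append a A b C).symm⟩
      · intro k
        induction k using Fin.addCases with
        | left i => show Fin.append a b _ ∈ _; rw [Fin.append_left]; exact ha i
        | right i => show Fin.append a b _ ∈ _; rw [Fin.append_right]; exact hb i
      · intro k
        induction k using Fin.addCases with
        | left i => show Fin.append A C _ ∈ B; rw [Fin.append_left]; exact hA i
        | right i => show Fin.append A C _ ∈ B; rw [Fin.append_right]; exact hC i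
      · intro x
        rw [simpleVal_append]
        exact add_le_add (hle x) (hle' x)
    rw [← le_sub_iff_add_le]
    apply csSup_le nef
    intro r hr
    rw [le_sub_iff_add_le, add_comm, ← le_sub_iff_add_le]
    apply csSup_le neg'
    intro r' hr'
    rw [le_sub_iff_add_le, add_comm]
    exact le_csSup bddfg (hadd r hr r' hr')
end

section
/- Let P be a probability premeasure on a premeasurable space X (countably additive on the algebra B_X whenever the disjoint union lies in B_X). If (f_n : X → [0,1]) is an increasing sequence of premeasurable maps whose pointwise limit f is also premeasurable, then lim_{n→∞} I_P(f_n) = I_P(f). -/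
open Set

variable {X : Type*}

namespace IlowAux

variable {B : Set (Set X)} {P : Set X → ℝ}

lemma empty_mem (hB : IsSetAlg B) : (∅ : Set X) ∈ B := by
  simpa using hB.compl_mem _ hB.univ_mem

lemma union_mem (hB : IsSetAlg B) {A C : Set X} (hA : A ∈ B) (hC : C ∈ B) :
    A ∪ C ∈ B := by
  have := hB.compl_mem _ (hB.inter_mem _ (hB.compl_mem _ hA) _ (hB.compl_mem _ hC))
  simpa [Set.compl_inter] using this

lemma finsetInter_mem (hB : IsSetAlg B) {ι : Type*} (s : Finset ι) (C : ι → Set X)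
    (h : ∀ i ∈ s, C i ∈ B) : (⋂ i ∈ s, C i) ∈ B := by
  classical
  induction s using Finset.induction with
  | empty => simpa using hB.univ_mem
  | insert a s hx ih =>
      rw [Finset.set_biInter_insert]
      exact hB.inter_mem _ (h a (Finset.mem_insert_self a s)) _
        (ih fun i hi => h i (Finset.mem_insert_of_mem hi))

lemma finsetUnion_mem (hB : IsSetAlg B) {ι : Type*} (s : Finset ι) (C : ι → Set X)
    (h : ∀ i ∈ s, C i ∈ B) : (⋃ i ∈ s, C i) ∈ B := by
  classical
  induction s using Finset.induction with
  | empty => simpa using empty_mem hB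
  | insert a s hx ih =>
      rw [Finset.set_biUnion_insert]
      exact union_mem hB (h a (Finset.mem_insert_self a s))
        (ih fun i hi => h i (Finset.mem_insert_of_mem hi))

lemma P_empty (hB : IsSetAlg B) (hP : IsProbPre B P) : P ∅ = 0 := by
  have h := hP.countably_add (fun _ => (∅ : Set X)) (fun _ => empty_mem hB)
    (fun m n _ => disjoint_bot_left) (by simpa using empty_mem hB)
  have h2 : Filter.Tendsto (fun _ : ℕ => P (∅ : Set X)) Filter.atTop (nhds 0) :=
    h.summable.tendsto_atTop_zero
  exact tendsto_nhds_unique tendsto_const_nhds h2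

lemma P_nonneg (hP : IsProbPre B P) {A : Set X} (hA : A ∈ B) : 0 ≤ P A :=
  (hP.mem_Icc A hA).1

lemma P_add (hB : IsSetAlg B) (hP : IsProbPre B P) {A C : Set X}
    (hA : A ∈ B) (hC : C ∈ B) (hd : Disjoint A C) : P (A ∪ C) = P A + P C := by
  classical
  set D : ℕ → Set X := fun n => if n = 0 then A else if n = 1 then C else ∅ with hD
  have hmem : ∀ n, D n ∈ B := by
    intro n
    simp only [hD]
    split_ifs <;> first | exact hA | exact hC | exact empty_mem hB
  have hdis : ∀ m n, m ≠ n → Disjoint (D m) (D n) := by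
    intro m n hmn
    simp only [hD]
    split_ifs <;> (try omega) <;>
      first | exact hd | exact hd.symm | exact disjoint_bot_left | exact disjoint_bot_right
  have hU : (⋃ n, D n) = A ∪ C := by
    apply Set.Subset.antisymm
    · apply Set.iUnion_subset
      intro n
      simp only [hD]
      split_ifs <;> simp [Set.subset_union_left, Set.subset_union_right]
    · apply Set.union_subset
      · have : D 0 = A := by simp [hD]
        exact this ▸ Set.subset_iUnion D 0
      · have : D 1 = C := by simp [hD]
        exact this ▸ Set.subset_iUnion D 1
  have h := hP.countably_add D hmem hdis (hU ▸ union_mem hB hA hC)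
  rw [hU] at h
  have h2 : HasSum (fun n => P (D n)) (P A + P C) := by
    have hz : ∀ b ∉ ({0, 1} : Finset ℕ), P (D b) = 0 := by
      intro b hb
      simp only [Finset.mem_insert, Finset.mem_singleton] at hb
      push_neg at hb
      simp [hD, hb.1, hb.2, P_empty hB hP]
    have := hasSum_sum_of_ne_finset_zero (L := SummationFilter.unconditional ℕ) hz
    have hs : ∑ b ∈ ({0, 1} : Finset ℕ), P (D b) = P A + P C := by
      rw [Finset.sum_pair (by norm_num : (0 : ℕ) ≠ 1)]
      simp [hD]
    rwa [hs] at this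
  exact h.unique h2

lemma P_finsetSum (hB : IsSetAlg B) (hP : IsProbPre B P) {ι : Type*}
    (s : Finset ι) (A : ι → Set X) (hA : ∀ i ∈ s, A i ∈ B)
    (hdis : ∀ i ∈ s, ∀ j ∈ s, i ≠ j → Disjoint (A i) (A j)) :
    P (⋃ i ∈ s, A i) = ∑ i ∈ s, P (A i) := by
  classical
  induction s using Finset.induction with
  | empty => simpa using P_empty hB hP
  | insert a s hx ih =>
      rw [Finset.set_biUnion_insert, Finset.sum_insert hx]
      have hd : Disjoint (A a) (⋃ i ∈ s, A i) := by
        rw [Set.disjoint_iUnion_right]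
        intro i
        rw [Set.disjoint_iUnion_right]
        intro hi
        exact hdis a (Finset.mem_insert_self a s) i (Finset.mem_insert_of_mem hi)
          (fun h => hx (h ▸ hi))
      rw [P_add hB hP (hA a (Finset.mem_insert_self a s))
        (finsetUnion_mem hB s A fun i hi => hA i (Finset.mem_insert_of_mem hi)) hd]
      rw [ih (fun i hi => hA i (Finset.mem_insert_of_mem hi))
        (fun i hi j hj => hdis i (Finset.mem_insert_of_mem hi) j (Finset.mem_insert_of_mem hj))]

/-- Continuity from below of `P` on the algebra `B`. -/
lemma P_tendsto (hB : IsSetAlg B) (hP : IsProbPre B P) (D : ℕ → Set X)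
    (hD : ∀ n, D n ∈ B) (hmono : ∀ n, D n ⊆ D (n + 1)) (L : Set X) (hL : L ∈ B)
    (hU : (⋃ n, D n) = L) :
    Filter.Tendsto (fun n => P (D n)) Filter.atTop (nhds (P L)) := by
  classical
  have hM : Monotone D := monotone_nat_of_le_succ hmono
  set G : ℕ → Set X := fun n => match n with
    | 0 => D 0
    | (m + 1) => D (m + 1) \ D m with hG
  have hGmem : ∀ n, G n ∈ B := by
    intro n
    match n with
    | 0 => exact hD 0
    | (m + 1) =>
        have := hB.inter_mem _ (hD (m + 1)) _ (hB.compl_mem _ (hD m))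
        exact this
  have hGsub : ∀ n, G n ⊆ D n := by
    intro n
    match n with
    | 0 => exact subset_rfl
    | (m + 1) => exact Set.diff_subset
  have hpart : ∀ n, D n = ⋃ k ∈ Finset.range (n + 1), G k := by
    intro n
    induction n with
    | zero => simp [hG]
    | succ m ihm =>
        rw [Finset.range_add_one, Finset.set_biUnion_insert, ← ihm]
        have : G (m + 1) = D (m + 1) \ D m := rfl
        rw [this, Set.diff_union_self, Set.union_eq_self_of_subset_right (hmono m)]
  have hGdis : ∀ m n, m ≠ n → Disjoint (G m) (G n) := by
    have key : ∀ m n, m < n → Disjoint (G m) (G n) := by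
      intro m n hmn
      match n, hmn with
      | (p + 1), hmn =>
          have h1 : G m ⊆ D p := (hGsub m).trans (hM (Nat.lt_succ_iff.mp hmn))
          have h2 : Disjoint (D p) (G (p + 1)) := by
            have : G (p + 1) = D (p + 1) \ D p := rfl
            rw [this]
            exact Set.disjoint_sdiff_right.mono_left subset_rfl |>.symm |>.symm
          exact (Set.disjoint_of_subset_left h1 h2)
    intro m n hmn
    rcases lt_or_gt_of_ne hmn with h | h
    · exact key m n h
    · exact (key n m h).symm
  have hGU : (⋃ n, G n) = L := by
    apply Set.Subset.antisymm
    · rw [← hU]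
      exact Set.iUnion_mono hGsub
    · rw [← hU]
      apply Set.iUnion_subset
      intro n
      rw [hpart n]
      apply Set.iUnion₂_subset
      intro k _
      exact Set.subset_iUnion G k
  have h := hP.countably_add G hGmem hGdis (hGU ▸ hL)
  rw [hGU] at h
  have h2 := h.tendsto_sum_nat
  have h3 : Filter.Tendsto (fun n => ∑ k ∈ Finset.range (n + 1), P (G k))
      Filter.atTop (nhds (P L)) :=
    h2.comp (Filter.tendsto_add_atTop_nat 1)
  have h4 : ∀ n, ∑ k ∈ Finset.range (n + 1), P (G k) = P (D n) := by
    intro n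
    rw [hpart n, P_finsetSum hB hP _ G (fun i _ => hGmem i)
      (fun i _ j _ hij => hGdis i j hij)]
  simpa [h4] using h3

section Atoms

variable {m : ℕ}

/-- The атom of the family `A` indexed by `T`. -/
def atom (A : Fin m → Set X) (T : Finset (Fin m)) : Set X :=
  {x | ∀ k, x ∈ A k ↔ k ∈ T}

lemma atom_mem (hB : IsSetAlg B) (A : Fin m → Set X) (hA : ∀ k, A k ∈ B)
    (T : Finset (Fin m)) : atom A T ∈ B := by
  classical
  have heq : atom A T = ⋂ k ∈ (Finset.univ : Finset (Fin m)),
      (if k ∈ T then A k else (A k)ᶜ) := by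
    ext x
    simp only [atom, Set.mem_setOf_eq, Set.mem_iInter, Finset.mem_univ, true_implies]
    constructor
    · intro h k
      by_cases hk : k ∈ T <;> simp [hk, h k]
    · intro h k
      have := h k
      by_cases hk : k ∈ T <;> simp [hk] at this <;> simp [hk, this]
  rw [heq]
  apply finsetInter_mem hB
  intro k _
  by_cases hk : k ∈ T <;> simp [hk, hA k, hB.compl_mem _ (hA k)]

lemma atom_disjoint (A : Fin m → Set X) {T T' : Finset (Fin m)} (h : T ≠ T') :
    Disjoint (atom A T) (atom A T') := by
  rw [Set.disjoint_left]
  intro x hx hx'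
  exact h (Finset.ext fun k => ((hx k).symm.trans (hx' k)))

/-- The tag of `x`: the set of indices `k` with `x ∈ A k`. -/
noncomputable def tag (A : Fin m → Set X) (x : X) : Finset (Fin m) :=
  @Finset.filter _ (fun k => x ∈ A k) (Classical.decPred _) Finset.univ

lemma mem_atom_tag (A : Fin m → Set X) (x : X) : x ∈ atom A (tag A x) := by
  intro k
  simp [tag]

lemma simpleVal_atom (a : Fin m → ℝ) (A : Fin m → Set X) {T : Finset (Fin m)}
    {x : X} (hx : x ∈ atom A T) : simpleVal a A x = ∑ k ∈ T, a k := by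
  classical
  unfold simpleVal
  have : ∀ k, a k * (A k).indicator (fun _ => (1 : ℝ)) x
      = if k ∈ T then a k else 0 := by
    intro k
    rw [Set.indicator_apply]
    by_cases hk : k ∈ T
    · simp [hk, (hx k).mpr hk]
    · have : x ∉ A k := fun h => hk ((hx k).mp h)
      simp [hk, this]
  rw [Finset.sum_congr rfl fun k _ => this k]
  simp [Finset.sum_ite_mem]

lemma A_eq_biUnion_atom (A : Fin m → Set X) (j : Fin m) :
    A j = ⋃ T ∈ Finset.univ.filter (fun T : Finset (Fin m) => j ∈ T), atom A T := by
  classical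
  apply Set.Subset.antisymm
  · intro x hx
    exact Set.mem_biUnion
      (Finset.mem_filter.mpr ⟨Finset.mem_univ _, by simp [tag, hx]⟩)
      (mem_atom_tag A x)
  · intro x hx
    obtain ⟨T, hT, hxT⟩ := Set.mem_iUnion₂.mp hx
    simp only [Finset.mem_filter, Finset.mem_univ, true_and] at hT
    exact (hxT j).mpr hT

lemma univ_eq_biUnion_atom (A : Fin m → Set X) :
    (⋃ T ∈ (Finset.univ : Finset (Finset (Fin m))), atom A T) = Set.univ := by
  apply Set.eq_univ_of_forall
  intro x
  exact Set.mem_biUnion (Finset.mem_univ _) (mem_atom_tag A x)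

/-- The elementary integral of a simple function bounded by `1` is at most `1`. -/
lemma JRep_le_one (hB : IsSetAlg B) (hP : IsProbPre B P) (a : Fin m → ℝ)
    (A : Fin m → Set X) (ha : ∀ k, a k ∈ Set.Icc (0 : ℝ) 1) (hA : ∀ k, A k ∈ B)
    (hle : ∀ x, simpleVal a A x ≤ 1) : JRep P a A ≤ 1 := by
  classical
  have hPA : ∀ j, P (A j)
      = ∑ T ∈ Finset.univ.filter (fun T : Finset (Fin m) => j ∈ T), P (atom A T) := by
    intro j
    rw [A_eq_biUnion_atom A j]
    exact P_finsetSum hB hP _ _ (fun T _ => atom_mem hB A hA T)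
      (fun T _ T' _ h => atom_disjoint A h)
  have hswap : JRep P a A
      = ∑ T : Finset (Fin m), (∑ j ∈ T, a j) * P (atom A T) := by
    unfold JRep
    rw [Finset.sum_congr rfl fun j _ => by rw [hPA j]]
    simp_rw [Finset.mul_sum, Finset.sum_filter]
    rw [Finset.sum_comm]
    congr 1
    ext T
    rw [Finset.sum_mul, Finset.sum_ite_mem, Finset.univ_inter]
  rw [hswap]
  have hterm : ∀ T : Finset (Fin m), (∑ j ∈ T, a j) * P (atom A T) ≤ P (atom A T) := by
    intro T
    rcases Set.eq_empty_or_nonempty (atom A T) with he | ⟨x, hx⟩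
    · simp [he, P_empty hB hP]
    · have h1 : (∑ j ∈ T, a j) ≤ 1 := by
        rw [← simpleVal_atom a A hx]
        exact hle x
      exact mul_le_of_le_one_left (P_nonneg hP (atom_mem hB A hA T)) h1
  calc ∑ T : Finset (Fin m), (∑ j ∈ T, a j) * P (atom A T)
      ≤ ∑ T : Finset (Fin m), P (atom A T) :=
        Finset.sum_le_sum fun T _ => hterm T
    _ = P (⋃ T ∈ (Finset.univ : Finset (Finset (Fin m))), atom A T) :=
        (P_finsetSum hB hP _ _ (fun T _ => atom_mem hB A hA T)
          (fun T _ T' _ h => atom_disjoint A h)).symm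
    _ = 1 := by rw [univ_eq_biUnion_atom A, hP.univ_one]

end Atoms

/-- The set of elementary integrals of simple functions below `f`. -/
def Sset (B : Set (Set X)) (P : Set X → ℝ) (f : X → ℝ) : Set ℝ :=
  {r | ∃ (n : ℕ) (a : Fin n → ℝ) (A : Fin n → Set X),
    (∀ k, a k ∈ Set.Icc (0 : ℝ) 1) ∧ (∀ k, A k ∈ B) ∧
    (∀ x, simpleVal a A x ≤ f x) ∧ r = JRep P a A}

lemma Ilow_eq (f : X → ℝ) : Ilow B P f = sSup (Sset B P f) := rfl

lemma zero_mem_Sset {f : X → ℝ} (hf : ∀ x, 0 ≤ f x) : (0 : ℝ) ∈ Sset B P f := by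
  refine ⟨0, Fin.elim0, Fin.elim0, fun k => k.elim0, fun k => k.elim0, ?_, ?_⟩
  · intro x
    simpa [simpleVal] using hf x
  · simp [JRep]

lemma Sset_nonneg (hP : IsProbPre B P) {f : X → ℝ} {r : ℝ} (hr : r ∈ Sset B P f) :
    0 ≤ r := by
  obtain ⟨n, a, A, ha, hA, _, rfl⟩ := hr
  exact Finset.sum_nonneg fun k _ => mul_nonneg (ha k).1 (P_nonneg hP (hA k))

lemma Sset_le_one (hB : IsSetAlg B) (hP : IsProbPre B P) {f : X → ℝ}
    (hf : ∀ x, f x ≤ 1) {r : ℝ} (hr : r ∈ Sset B P f) : r ≤ 1 := by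
  obtain ⟨n, a, A, ha, hA, hle, rfl⟩ := hr
  exact JRep_le_one hB hP a A ha hA fun x => (hle x).trans (hf x)

lemma Sset_mono {f h : X → ℝ} (hfh : ∀ x, f x ≤ h x) : Sset B P f ⊆ Sset B P h := by
  rintro r ⟨n, a, A, ha, hA, hle, rfl⟩
  exact ⟨n, a, A, ha, hA, fun x => (hle x).trans (hfh x), rfl⟩

/-- Preimage of `[c, ∞)` under a premeasurable map lies in `B`. -/
lemma level_mem {h : X → ℝ} (hh : PreMble B h) (c : ℝ) : {x | c ≤ h x} ∈ B := by
  have hT : InGenAlg {I | ∃ a b : ℝ, I = Set.Ioo a b} (Set.Ioo (-2) c)ᶜ :=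
    InGenAlg.compl _ (InGenAlg.basic _ ⟨-2, c, rfl⟩)
  have h2 := hh.2 _ hT
  have heq : h ⁻¹' (Set.Ioo (-2) c)ᶜ = {x | c ≤ h x} := by
    ext x
    have h0 : 0 ≤ h x := (hh.1 x).1
    simp only [Set.mem_preimage, Set.mem_compl_iff, Set.mem_Ioo, Set.mem_setOf_eq,
      not_and, not_lt]
    constructor
    · intro hc
      exact hc (by linarith)
    · intro hc _
      exact hc
  rwa [heq] at h2

end IlowAux

open IlowAux in
/-- Monotone convergence for a probability premeasure `P`: if an
increasing sequence of premeasurable maps `f n : X → [0,1]` converges pointwise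
to a premeasurable `f`, then `I_P (f n) → I_P f`. -/
theorem Ilow_tendsto_of_monotone (B : Set (Set X)) (hB : IsSetAlg B)
    (P : Set X → ℝ) (hP : IsProbPre B P)
    (f : ℕ → X → ℝ) (hfn : ∀ n, PreMble B (f n))
    (hmono : ∀ n x, f n x ≤ f (n + 1) x)
    (g : X → ℝ) (hg : PreMble B g)
    (hlim : ∀ x, Filter.Tendsto (fun n => f n x) Filter.atTop (nhds (g x))) :
    Filter.Tendsto (fun n => Ilow B P (f n)) Filter.atTop (nhds (Ilow B P g)) := by
  classical
  have hfmono : ∀ x, Monotone fun n => f n x :=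
    fun x => monotone_nat_of_le_succ fun n => hmono n x
  have hfn0 : ∀ n x, 0 ≤ f n x := fun n x => ((hfn n).1 x).1
  have hfle_g : ∀ n x, f n x ≤ g x := by
    intro n x
    apply ge_of_tendsto (hlim x)
    exact Filter.eventually_atTop.mpr ⟨n, fun m hm => hfmono x hm⟩
  have hg1 : ∀ x, g x ≤ 1 := fun x => (hg.1 x).2
  have hg0 : ∀ x, 0 ≤ g x := fun x => (hg.1 x).1
  have hbddAg : BddAbove (Sset B P g) := ⟨1, fun r hr => Sset_le_one hB hP hg1 hr⟩
  have hSsub : ∀ n, Sset B P (f n) ⊆ Sset B P g := fun n => Sset_mono (hfle_g n)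
  have hne : ∀ n, (Sset B P (f n)).Nonempty := fun n => ⟨0, zero_mem_Sset (hfn0 n)⟩
  have hneg : (Sset B P g).Nonempty := ⟨0, zero_mem_Sset hg0⟩
  set u : ℕ → ℝ := fun n => Ilow B P (f n) with hu
  have hubdd : ∀ n, u n ≤ Ilow B P g := fun n =>
    csSup_le_csSup hbddAg (hne n) (hSsub n)
  have humono : Monotone u := by
    intro p q hpq
    exact csSup_le_csSup (BddAbove.mono (hSsub q) hbddAg) (hne p)
      (Sset_mono fun x => hfmono x hpq)
  have hbr : BddAbove (Set.range u) :=
    ⟨Ilow B P g, by rintro _ ⟨n, rfl⟩; exact hubdd n⟩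
  have hT := tendsto_atTop_ciSup humono hbr
  suffices h : (⨆ n, u n) = Ilow B P g by rwa [h] at hT
  refine le_antisymm (ciSup_le hubdd) ?_
  rw [Ilow_eq]
  apply csSup_le hneg
  rintro r ⟨mm, a, A, ha, hA, hsle, rfl⟩
  have key : ∀ ε : ℝ, 0 < ε → ε < 1 → (1 - ε) * JRep P a A ≤ ⨆ n, u n := by
    intro ε hε0 hε1
    have hε1' : (0 : ℝ) ≤ 1 - ε := by linarith
    set E : ℕ → Set X := fun n => {x | (1 - ε) * simpleVal a A x ≤ f n x} with hE
    have hE_mem : ∀ n, E n ∈ B := by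
      intro n
      have heq : E n = ⋃ T ∈ (Finset.univ : Finset (Finset (Fin mm))),
          (atom A T ∩ {x | (1 - ε) * ∑ k ∈ T, a k ≤ f n x}) := by
        ext x
        simp only [hE, Set.mem_setOf_eq, Set.mem_iUnion, Set.mem_inter_iff, exists_prop]
        constructor
        · intro h
          exact ⟨tag A x, Finset.mem_univ _, mem_atom_tag A x,
            by rwa [← simpleVal_atom a A (mem_atom_tag A x)]⟩
        · rintro ⟨T, _, hxT, hTle⟩
          rwa [simpleVal_atom a A hxT]
      rw [heq]
      exact finsetUnion_mem hB _ _ fun T _ =>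
        hB.inter_mem _ (atom_mem hB A hA T) _ (level_mem (hfn n) _)
    have hE_mono : ∀ n, E n ⊆ E (n + 1) := fun n x hx => le_trans hx (hmono n x)
    have hEU : (⋃ n, E n) = Set.univ := by
      apply Set.eq_univ_of_forall
      intro x
      rcases le_or_gt (simpleVal a A x) 0 with hs | hs
      · exact Set.mem_iUnion.mpr
          ⟨0, le_trans (mul_nonpos_of_nonneg_of_nonpos hε1' hs) (hfn0 0 x)⟩
      · have hlt : (1 - ε) * simpleVal a A x < g x := by
          have h1 : (1 - ε) * simpleVal a A x < simpleVal a A x := by nlinarith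
          exact lt_of_lt_of_le h1 (hsle x)
        obtain ⟨n, hn⟩ := ((hlim x).eventually (eventually_gt_nhds hlt)).exists
        exact Set.mem_iUnion.mpr ⟨n, le_of_lt hn⟩
    set v : ℕ → ℝ := fun n => (1 - ε) * ∑ k, a k * P (A k ∩ E n) with hv
    have hv_mem : ∀ n, v n ∈ Sset B P (f n) := by
      intro n
      refine ⟨mm, fun k => (1 - ε) * a k, fun k => A k ∩ E n, ?_, ?_, ?_, ?_⟩
      · intro k
        exact ⟨mul_nonneg hε1' (ha k).1,
          mul_le_one₀ (by linarith) (ha k).1 (ha k).2⟩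
      · intro k; exact hB.inter_mem _ (hA k) _ (hE_mem n)
      · intro x
        by_cases hx : x ∈ E n
        · have heq : simpleVal (fun k => (1 - ε) * a k) (fun k => A k ∩ E n) x
              = (1 - ε) * simpleVal a A x := by
            unfold simpleVal
            rw [Finset.mul_sum]
            apply Finset.sum_congr rfl
            intro k _
            rw [Set.indicator_apply, Set.indicator_apply]
            by_cases hk : x ∈ A k <;> simp [hk, hx, mul_assoc]
          rw [heq]; exact hx
        · have heq : simpleVal (fun k => (1 - ε) * a k) (fun k => A k ∩ E n) x = 0 := by
            unfold simpleVal
            apply Finset.sum_eq_zero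
            intro k _
            have hxk : x ∉ A k ∩ E n := fun h => hx h.2
            simp [hxk]
          rw [heq]; exact hfn0 n x
      · simp only [hv, JRep, Finset.mul_sum, mul_assoc]
    have hv_le : ∀ n, v n ≤ ⨆ n, u n := by
      intro n
      exact (le_csSup (BddAbove.mono (hSsub n) hbddAg) (hv_mem n)).trans (le_ciSup hbr n)
    have hv_lim : Filter.Tendsto v Filter.atTop (nhds ((1 - ε) * JRep P a A)) := by
      apply Filter.Tendsto.const_mul
      apply tendsto_finset_sum
      intro k _
      apply Filter.Tendsto.const_mul
      apply P_tendsto hB hP (fun n => A k ∩ E n)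
        (fun n => hB.inter_mem _ (hA k) _ (hE_mem n))
        (fun n => Set.inter_subset_inter_right _ (hE_mono n)) (A k) (hA k)
      rw [← Set.inter_iUnion, hEU, Set.inter_univ]
    exact le_of_tendsto' hv_lim hv_le
  have hlim2 : Filter.Tendsto (fun k : ℕ => (1 - 1 / ((k : ℝ) + 1)) * JRep P a A)
      Filter.atTop (nhds (JRep P a A)) := by
    have h1 : Filter.Tendsto (fun k : ℕ => 1 - 1 / ((k : ℝ) + 1)) Filter.atTop
        (nhds 1) := by
      have h0 := tendsto_one_div_add_atTop_nhds_zero_nat (𝕜 := ℝ)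
      simpa using (tendsto_const_nhds (x := (1 : ℝ))).sub h0
    simpa using h1.mul_const (JRep P a A)
  apply le_of_tendsto hlim2
  filter_upwards [Filter.eventually_ge_atTop 1] with k hk
  apply key
  · positivity
  · rw [div_lt_one (by positivity)]
    have hk1 : (1 : ℝ) ≤ (k : ℝ) := by exact_mod_cast hk
    linarith
end

section
/- Let X be a premeasurable space and let I : PreMble(X,[0,1]) → [0,1] satisfy I(1) = 1 and I(f+g) = I(f) + I(g) whenever f, g, and f+g are all premeasurable maps X → [0,1]. Then there exists a unique finitely additive probability premeasure P on B_X such that I = I_P. -/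
open Set

variable {X : Type*}

private lemma setAlg_empty {B : Set (Set X)} (hB : IsSetAlg B) : ∅ ∈ B := by
  have := hB.compl_mem _ hB.univ_mem; simpa using this

private lemma setAlg_union {B : Set (Set X)} (hB : IsSetAlg B) {A C : Set X}
    (hA : A ∈ B) (hC : C ∈ B) : A ∪ C ∈ B := by
  have := hB.compl_mem _ (hB.inter_mem _ (hB.compl_mem _ hA) _ (hB.compl_mem _ hC))
  simpa [Set.compl_inter, compl_compl] using this

private lemma inGenAlg_affine {T : Set ℝ}
    (hT : InGenAlg {I | ∃ a b : ℝ, I = Set.Ioo a b} T) (c d : ℝ) (hc : 0 < c) :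
    InGenAlg {I | ∃ a b : ℝ, I = Set.Ioo a b} ((fun y => c * y + d) ⁻¹' T) := by
  induction hT with
  | basic s hs =>
      obtain ⟨a, b, rfl⟩ := hs
      have h : (fun y => c * y + d) ⁻¹' Set.Ioo a b = Set.Ioo ((a - d)/c) ((b - d)/c) := by
        ext y
        simp only [Set.mem_preimage, Set.mem_Ioo, div_lt_iff₀ hc, lt_div_iff₀ hc]
        constructor <;> intro h <;> constructor <;> nlinarith [h.1, h.2]
      rw [h]; exact InGenAlg.basic _ ⟨_, _, rfl⟩
  | univ => simpa using InGenAlg.univ (S := {I | ∃ a b : ℝ, I = Set.Ioo a b})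
  | compl s _ ih => exact InGenAlg.compl _ ih
  | inter s t _ _ ih1 ih2 => exact InGenAlg.inter _ _ ih1 ih2
private lemma preMble_const {B : Set (Set X)} (hB : IsSetAlg B) {c : ℝ}
    (hc : c ∈ Set.Icc (0:ℝ) 1) : PreMble B (fun _ => c) := by
  refine ⟨fun _ => hc, fun T _ => ?_⟩
  by_cases h : c ∈ T
  · have : (fun _ : X => c) ⁻¹' T = Set.univ := by ext x; simp [h]
    rw [this]; exact hB.univ_mem
  · have : (fun _ : X => c) ⁻¹' T = ∅ := by ext x; simp [h]
    rw [this]; exact setAlg_empty hB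

private lemma indicator_mem_Icc (A : Set X) (x : X) :
    A.indicator (fun _ => (1:ℝ)) x ∈ Set.Icc (0:ℝ) 1 := by
  by_cases hx : x ∈ A <;> simp [hx]

private lemma preMble_indicator {B : Set (Set X)} (hB : IsSetAlg B) {A : Set X} (hA : A ∈ B) :
    PreMble B (fun x => A.indicator (fun _ => (1:ℝ)) x) := by
  classical
  refine ⟨fun x => indicator_mem_Icc A x, fun T _ => ?_⟩
  have key : (fun x => A.indicator (fun _ => (1:ℝ)) x) ⁻¹' T =
      ((if (1:ℝ) ∈ T then A else ∅) ∪ (if (0:ℝ) ∈ T then Aᶜ else ∅)) := by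
    ext x; by_cases hx : x ∈ A <;> by_cases h1 : (1:ℝ) ∈ T <;> by_cases h0 : (0:ℝ) ∈ T <;>
      simp [hx, h1, h0]
  rw [key]
  apply setAlg_union hB <;> split <;>
    first
      | exact hA
      | exact hB.compl_mem _ hA
      | exact setAlg_empty hB

private lemma simpleVal_nonneg {n : ℕ} {a : Fin n → ℝ} (A : Fin n → Set X)
    (ha : ∀ k, 0 ≤ a k) (x : X) : 0 ≤ simpleVal a A x := by
  apply Finset.sum_nonneg
  intro k _
  exact mul_nonneg (ha k) (indicator_mem_Icc (A k) x).1

private lemma simpleVal_preimage {B : Set (Set X)} (hB : IsSetAlg B) :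
    ∀ (n : ℕ) (a : Fin n → ℝ) (A : Fin n → Set X), (∀ k, A k ∈ B) →
    ∀ T : Set ℝ, InGenAlg {I | ∃ a b : ℝ, I = Set.Ioo a b} T →
    (simpleVal a A) ⁻¹' T ∈ B := by
  intro n
  induction n with
  | zero =>
      intro a A hA T hT
      have h : simpleVal a A = fun _ => (0:ℝ) := by funext x; simp [simpleVal]
      rw [h]
      exact (preMble_const hB ⟨le_refl 0, zero_le_one⟩).2 T hT
  | succ n ih =>
      intro a A hA T hT
      set g := simpleVal (fun k => a k.succ) (fun k => A k.succ) with hg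
      have key : (simpleVal a A) ⁻¹' T =
          (A 0 ∩ g ⁻¹' ((fun y => 1*y + a 0) ⁻¹' T)) ∪ ((A 0)ᶜ ∩ g ⁻¹' T) := by
        ext x
        have hsv : simpleVal a A x = a 0 * (A 0).indicator (fun _ => (1:ℝ)) x + g x := by
          simp [simpleVal, hg, Fin.sum_univ_succ]
        by_cases hx : x ∈ A 0 <;>
          simp [hsv, hx, Set.indicator_of_mem, Set.indicator_of_notMem, one_mul,
            add_comm (g x) (a 0)]
      rw [key]
      exact setAlg_union hB
        (hB.inter_mem _ (hA 0) _ (ih _ _ (fun k => hA k.succ) _ (inGenAlg_affine hT 1 (a 0) one_pos)))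
        (hB.inter_mem _ (hB.compl_mem _ (hA 0)) _ (ih _ _ (fun k => hA k.succ) _ hT))

private lemma preMble_simpleVal {B : Set (Set X)} (hB : IsSetAlg B) {n : ℕ}
    {a : Fin n → ℝ} {A : Fin n → Set X} (ha : ∀ k, 0 ≤ a k) (hA : ∀ k, A k ∈ B)
    (hle : ∀ x, simpleVal a A x ≤ 1) : PreMble B (simpleVal a A) :=
  ⟨fun x => ⟨simpleVal_nonneg A ha x, hle x⟩, fun T hT => simpleVal_preimage hB n a A hA T hT⟩
private lemma preMble_sub_single {B : Set (Set X)} (hB : IsSetAlg B) {f : X → ℝ}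
    (hf : PreMble B f) {a : ℝ} (ha : 0 ≤ a) {A : Set X} (hA : A ∈ B)
    (hle : ∀ x, a * A.indicator (fun _ => (1:ℝ)) x ≤ f x) :
    PreMble B (fun x => f x - a * A.indicator (fun _ => (1:ℝ)) x) := by
  constructor
  · intro x
    have h1 := hf.1 x
    have h2 := hle x
    have h3 : 0 ≤ a * A.indicator (fun _ => (1:ℝ)) x :=
      mul_nonneg ha (indicator_mem_Icc A x).1
    constructor
    · show 0 ≤ f x - a * A.indicator (fun _ => (1:ℝ)) x
      linarith
    · show f x - a * A.indicator (fun _ => (1:ℝ)) x ≤ 1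
      linarith [h1.2]
  · intro T hT
    have key : (fun x => f x - a * A.indicator (fun _ => (1:ℝ)) x) ⁻¹' T =
        (A ∩ f ⁻¹' ((fun y => 1*y + (-a)) ⁻¹' T)) ∪ (Aᶜ ∩ f ⁻¹' T) := by
      ext x
      by_cases hx : x ∈ A <;>
        simp [hx, Set.indicator_of_mem, Set.indicator_of_notMem, sub_eq_add_neg, one_mul]
    rw [key]
    exact setAlg_union hB
      (hB.inter_mem _ hA _ (hf.2 _ (inGenAlg_affine hT 1 (-a) one_pos)))
      (hB.inter_mem _ (hB.compl_mem _ hA) _ (hf.2 _ hT))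

private lemma preMble_sub_simpleVal {B : Set (Set X)} (hB : IsSetAlg B) :
    ∀ (n : ℕ) (a : Fin n → ℝ) (A : Fin n → Set X),
    (∀ k, 0 ≤ a k) → (∀ k, A k ∈ B) → ∀ f : X → ℝ, PreMble B f →
    (∀ x, simpleVal a A x ≤ f x) → PreMble B (fun x => f x - simpleVal a A x) := by
  intro n
  induction n with
  | zero =>
      intro a A ha hA f hf hle
      have h : (fun x => f x - simpleVal a A x) = f := by
        funext x; simp [simpleVal]
      rw [h]; exact hf
  | succ n ih =>
      intro a A ha hA f hf hle
      have hterm : ∀ k x, 0 ≤ a k * (A k).indicator (fun _ => (1:ℝ)) x :=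
        fun k x => mul_nonneg (ha k) (indicator_mem_Icc (A k) x).1
      have hsv : ∀ x, simpleVal a A x
          = a 0 * (A 0).indicator (fun _ => (1:ℝ)) x
            + simpleVal (fun k => a k.succ) (fun k => A k.succ) x := by
        intro x; simp [simpleVal, Fin.sum_univ_succ]
      have htail_nonneg : ∀ x, 0 ≤ simpleVal (fun k => a k.succ) (fun k => A k.succ) x :=
        simpleVal_nonneg _ (fun k => ha k.succ)
      have hg : PreMble B (fun x => f x - a 0 * (A 0).indicator (fun _ => (1:ℝ)) x) := by
        apply preMble_sub_single hB hf (ha 0) (hA 0)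
        intro x
        have := hle x
        rw [hsv x] at this
        linarith [htail_nonneg x]
      have := ih (fun k => a k.succ) (fun k => A k.succ) (fun k => ha k.succ)
        (fun k => hA k.succ) _ hg (by
          intro x
          have := hle x
          rw [hsv x] at this
          show simpleVal (fun k => a k.succ) (fun k => A k.succ) x
            ≤ f x - a 0 * (A 0).indicator (fun _ => (1:ℝ)) x
          linarith)
      have heq : (fun x => (fun x => f x - a 0 * (A 0).indicator (fun _ => (1:ℝ)) x) x
          - simpleVal (fun k => a k.succ) (fun k => A k.succ) x)
          = (fun x => f x - simpleVal a A x) := by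
        funext x; rw [hsv x]; ring
      rwa [heq] at this

private lemma preMble_smul {B : Set (Set X)} (hB : IsSetAlg B) {g : X → ℝ}
    (hg : PreMble B g) {c : ℝ} (hc : 0 < c) (hle : ∀ x, c * g x ≤ 1) :
    PreMble B (fun x => c * g x) := by
  constructor
  · intro x; exact ⟨mul_nonneg hc.le (hg.1 x).1, hle x⟩
  · intro T hT
    have h : (fun x => c * g x) ⁻¹' T = g ⁻¹' ((fun y => c*y + 0) ⁻¹' T) := by
      ext x; simp
    rw [h]; exact hg.2 _ (inGenAlg_affine hT c 0 hc)
private lemma preMble_scaled_indicator {B : Set (Set X)} (hB : IsSetAlg B) {A : Set X}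
    (hA : A ∈ B) {c : ℝ} (hc : c ∈ Set.Icc (0:ℝ) 1) :
    PreMble B (fun x => c * A.indicator (fun _ => (1:ℝ)) x) := by
  rcases eq_or_lt_of_le hc.1 with h | h
  · have heq : (fun x => c * A.indicator (fun _ => (1:ℝ)) x) = fun _ => (0:ℝ) := by
      funext x; rw [← h]; ring
    rw [heq]; exact preMble_const hB ⟨le_rfl, zero_le_one⟩
  · exact preMble_smul hB (preMble_indicator hB hA) h (fun x => by
      have h1 := (indicator_mem_Icc A x).1
      have h2 := (indicator_mem_Icc A x).2
      nlinarith [hc.2])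

section Ilemmas

variable {B : Set (Set X)} (hB : IsSetAlg B) {I : (X → ℝ) → ℝ}
  (hI01 : ∀ f, PreMble B f → I f ∈ Set.Icc (0 : ℝ) 1)
  (hadd : ∀ f g : X → ℝ, PreMble B f → PreMble B g → PreMble B (fun x => f x + g x) →
    I (fun x => f x + g x) = I f + I g)

include hB hadd

private lemma I_zero : I (fun _ => (0:ℝ)) = 0 := by
  have hc : PreMble B (fun _ : X => (0:ℝ)) := preMble_const hB ⟨le_rfl, zero_le_one⟩
  have h := hadd (fun _ => 0) (fun _ => 0) hc hc (by simpa using hc)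
  rw [show (fun _ : X => (0:ℝ) + 0) = (fun _ : X => (0:ℝ)) from funext fun _ => add_zero 0] at h
  linarith

include hI01

private lemma I_scaled_indicator {A : Set X} (hA : A ∈ B) {c : ℝ} (hc : c ∈ Set.Icc (0:ℝ) 1) :
    I (fun x => c * A.indicator (fun _ => (1:ℝ)) x)
      = c * I (fun x => A.indicator (fun _ => (1:ℝ)) x) := by
  set ind : X → ℝ := fun x => A.indicator (fun _ => (1:ℝ)) x with hind
  set PA : ℝ := I ind with hPA
  -- additivity of φ
  have addφ : ∀ a b : ℝ, 0 ≤ a → 0 ≤ b → a + b ≤ 1 →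
      I (fun x => (a+b) * ind x) = I (fun x => a * ind x) + I (fun x => b * ind x) := by
    intro a b ha hb hab
    have pma := preMble_scaled_indicator hB hA (c := a) ⟨ha, by linarith⟩
    have pmb := preMble_scaled_indicator hB hA (c := b) ⟨hb, by linarith⟩
    have pmab := preMble_scaled_indicator hB hA (c := a + b) ⟨by linarith, hab⟩
    have h := hadd _ _ pma pmb (by
      have heq : (fun x => a * ind x + b * ind x) = (fun x => (a+b) * ind x) := by
        funext x; ring
      rw [heq]; exact pmab)
    have heq : (fun x => a * ind x + b * ind x) = (fun x => (a+b) * ind x) := by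
      funext x; ring
    rw [heq] at h
    exact h
  -- φ(1) = PA
  have φ1 : I (fun x => (1:ℝ) * ind x) = PA := by
    rw [show (fun x => (1:ℝ) * ind x) = ind from funext fun x => one_mul _]
  -- nat multiples
  have natφ : ∀ m : ℕ, ∀ d : ℝ, 0 ≤ d → (m:ℝ) * d ≤ 1 →
      I (fun x => ((m:ℝ) * d) * ind x) = (m:ℝ) * I (fun x => d * ind x) := by
    intro m
    induction m with
    | zero =>
        intro d hd hmd
        have heq : (fun x => (((0:ℕ):ℝ) * d) * ind x) = fun _ => (0:ℝ) := by
          funext x; push_cast; ring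
        rw [heq, I_zero hB hadd]
        push_cast; ring
    | succ m ih =>
        intro d hd hmd
        have hmd' : (m:ℝ) * d ≤ 1 := by push_cast at hmd; nlinarith
        have hmd'' : (m:ℝ) * d ≤ ((m:ℝ)+1) * d := by nlinarith
        have h := addφ ((m:ℝ) * d) d (by positivity) hd (by push_cast at hmd ⊢; nlinarith)
        have heq : (fun x => ((((m:ℕ):ℝ)+1) * d) * ind x)
            = (fun x => ((m:ℝ) * d + d) * ind x) := by funext x; ring
        have heq2 : (fun x => (((m+1:ℕ):ℝ) * d) * ind x)
            = (fun x => ((m:ℝ) * d + d) * ind x) := by funext x; push_cast; ring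
        rw [heq2, h, ih d hd hmd']
        push_cast; ring
  -- monotonicity
  have monoφ : ∀ a b : ℝ, 0 ≤ a → a ≤ b → b ≤ 1 →
      I (fun x => a * ind x) ≤ I (fun x => b * ind x) := by
    intro a b ha hab hb
    have h := addφ a (b - a) ha (by linarith) (by linarith)
    rw [show a + (b - a) = b by ring] at h
    have hnn := (hI01 _ (preMble_scaled_indicator hB hA (c := b - a)
      ⟨by linarith, by linarith⟩)).1
    linarith
  -- value at 1/n and p/n
  have hPA01 : PA ∈ Set.Icc (0:ℝ) 1 := hI01 _ (by
    rw [hind]; exact preMble_indicator hB hA)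
  have frac : ∀ N : ℕ, 0 < N → ∀ p : ℕ, p ≤ N →
      I (fun x => ((p:ℝ)/(N:ℝ)) * ind x) = ((p:ℝ)/(N:ℝ)) * PA := by
    intro N hN p hp
    have hNpos : (0:ℝ) < N := by exact_mod_cast hN
    have hinv : I (fun x => ((1:ℝ)/(N:ℝ)) * ind x) = PA / N := by
      have h := natφ N ((1:ℝ)/N) (by positivity) (by field_simp; exact le_rfl)
      rw [show (N:ℝ) * ((1:ℝ)/N) = 1 by field_simp] at h
      rw [φ1] at h
      rw [eq_div_iff (ne_of_gt hNpos), mul_comm]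
      exact h.symm
    have h := natφ p ((1:ℝ)/N) (by positivity) (by
      rw [mul_one_div, div_le_one hNpos]; exact_mod_cast hp)
    rw [show (fun x => ((p:ℝ) * ((1:ℝ)/N)) * ind x) = (fun x => ((p:ℝ)/N) * ind x) by
      funext x; ring] at h
    rw [h, hinv]
    ring
  -- squeeze
  have key : ∀ n : ℕ, |I (fun x => c * ind x) - c * PA| ≤ 1/((n:ℝ)+1) := by
    intro n
    set N : ℕ := n + 1 with hNdef
    have hNpos : (0:ℝ) < N := by positivity
    set p : ℕ := ⌊(N:ℝ) * c⌋₊ with hp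
    set q : ℕ := ⌈(N:ℝ) * c⌉₊ with hq
    have hNc0 : 0 ≤ (N:ℝ) * c := by nlinarith [hc.1]
    have hpN : p ≤ N := by
      rw [hp]
      have := Nat.floor_le_of_le (by nlinarith [hc.2] : (N:ℝ) * c ≤ (N:ℝ))
      simpa using this
    have hqN : q ≤ N := by
      rw [hq]
      exact Nat.ceil_le.mpr (by nlinarith [hc.2])
    have hple : ((p:ℝ)/N) ≤ c := by
      rw [div_le_iff₀ hNpos]
      have := Nat.floor_le hNc0
      linarith [this]
    have hqge : c ≤ ((q:ℝ)/N) := by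
      rw [le_div_iff₀ hNpos]
      have := Nat.le_ceil ((N:ℝ) * c)
      linarith
    have hplow : (N:ℝ) * c < (p:ℝ) + 1 := Nat.lt_floor_add_one _
    have hqhigh : (q:ℝ) < (N:ℝ) * c + 1 := by
      have := Nat.ceil_lt_add_one hNc0
      exact_mod_cast this
    have hlow := monoφ ((p:ℝ)/N) c (by positivity) hple hc.2
    have hhigh := monoφ c ((q:ℝ)/N) hc.1 hqge (by
      rw [div_le_one hNpos]; exact_mod_cast hqN)
    rw [frac N (Nat.succ_pos n) p hpN] at hlow
    rw [frac N (Nat.succ_pos n) q hqN] at hhigh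
    have h2a : c ≤ ((p:ℝ)+1)/N := by
      rw [le_div_iff₀ hNpos]
      nlinarith [mul_comm c (N:ℝ)]
    have hsplitp : ((p:ℝ)+1)/N = (p:ℝ)/N + 1/N := by ring
    have h2 : c - (p:ℝ)/N ≤ 1/(N:ℝ) := by linarith
    have h2b : (q:ℝ)/N ≤ c + 1/N := by
      rw [div_le_iff₀ hNpos, add_mul, one_div_mul_cancel (ne_of_gt hNpos)]
      nlinarith [mul_comm c (N:ℝ)]
    have h2' : (q:ℝ)/N - c ≤ 1/(N:ℝ) := by linarith
    have hNn : ((n:ℝ)+1) = (N:ℝ) := by push_cast [hNdef]; ring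
    rw [abs_le, hNn]
    constructor
    · have h1 : c * PA - ((p:ℝ)/N) * PA ≤ 1/(N:ℝ) := by
        have h3 : (c - (p:ℝ)/N) * PA ≤ (c - (p:ℝ)/N) * 1 :=
          mul_le_mul_of_nonneg_left hPA01.2 (sub_nonneg.mpr hple)
        have h4 : (0:ℝ) < 1/(N:ℝ) := by positivity
        nlinarith
      linarith
    · have h1 : ((q:ℝ)/N) * PA - c * PA ≤ 1/(N:ℝ) := by
        have h3 : ((q:ℝ)/N - c) * PA ≤ ((q:ℝ)/N - c) * 1 :=
          mul_le_mul_of_nonneg_left hPA01.2 (sub_nonneg.mpr hqge)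
        have h4 : (0:ℝ) < 1/(N:ℝ) := by positivity
        nlinarith
      linarith
  -- conclude
  by_contra hne
  have hpos : 0 < |I (fun x => c * ind x) - c * PA| := by
    rcases abs_pos.mpr (sub_ne_zero.mpr hne) with h
    exact h
  obtain ⟨n, hn⟩ := exists_nat_one_div_lt hpos
  exact absurd (key n) (not_le.mpr hn)

end Ilemmas
section Ilemmas2

variable {B : Set (Set X)} (hB : IsSetAlg B) {I : (X → ℝ) → ℝ}
  (hI01 : ∀ f, PreMble B f → I f ∈ Set.Icc (0 : ℝ) 1)
  (hadd : ∀ f g : X → ℝ, PreMble B f → PreMble B g → PreMble B (fun x => f x + g x) →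
    I (fun x => f x + g x) = I f + I g)

include hB hI01 hadd

private lemma I_simpleVal : ∀ (n : ℕ) (a : Fin n → ℝ) (A : Fin n → Set X),
    (∀ k, a k ∈ Set.Icc (0:ℝ) 1) → (∀ k, A k ∈ B) → (∀ x, simpleVal a A x ≤ 1) →
    I (simpleVal a A) = ∑ k, a k * I (fun x => (A k).indicator (fun _ => (1:ℝ)) x) := by
  intro n
  induction n with
  | zero =>
      intro a A ha hA hle
      rw [show simpleVal a A = (fun _ => (0:ℝ)) from funext fun x => by simp [simpleVal]]
      rw [I_zero hB hadd]
      simp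
  | succ n ih =>
      intro a A ha hA hle
      set h : X → ℝ := fun x => a 0 * (A 0).indicator (fun _ => (1:ℝ)) x with hh
      set t : X → ℝ := simpleVal (fun k => a k.succ) (fun k => A k.succ) with ht
      have hsv : ∀ x, simpleVal a A x = h x + t x := by
        intro x; simp [simpleVal, hh, ht, Fin.sum_univ_succ]
      have hh_nonneg : ∀ x, 0 ≤ h x :=
        fun x => mul_nonneg (ha 0).1 (indicator_mem_Icc (A 0) x).1
      have ht_nonneg : ∀ x, 0 ≤ t x :=
        simpleVal_nonneg _ (fun k => (ha k.succ).1)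
      have ht_le : ∀ x, t x ≤ 1 := by
        intro x
        have := hle x
        rw [hsv x] at this
        linarith [hh_nonneg x]
      have pm_h : PreMble B h := preMble_scaled_indicator hB (hA 0) (ha 0)
      have pm_t : PreMble B t :=
        preMble_simpleVal hB (fun k => (ha k.succ).1) (fun k => hA k.succ) ht_le
      have pm_sum : PreMble B (fun x => h x + t x) := by
        rw [show (fun x => h x + t x) = simpleVal a A from funext fun x => (hsv x).symm]
        exact preMble_simpleVal hB (fun k => (ha k).1) hA hle
      have hI := hadd h t pm_h pm_t pm_sum
      rw [show (fun x => h x + t x) = simpleVal a A from funext fun x => (hsv x).symm] at hI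
      rw [hI, hh]
      rw [I_scaled_indicator hB hI01 hadd (hA 0) (ha 0)]
      rw [ht, ih _ _ (fun k => ha k.succ) (fun k => hA k.succ) ht_le]
      rw [Fin.sum_univ_succ]

private lemma I_small {g : X → ℝ} (hg : PreMble B g) {n : ℕ} (hn : 0 < n)
    (hle : ∀ x, g x ≤ 1/(n:ℝ)) : I g ≤ 1/(n:ℝ) := by
  have hnR : (0:ℝ) < (n:ℝ) := by exact_mod_cast hn
  have pm : ∀ m : ℕ, m ≤ n → PreMble B (fun x => (m:ℝ) * g x) := by
    intro m hm
    rcases Nat.eq_zero_or_pos m with rfl | hmpos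
    · simpa using preMble_const hB (X := X) ⟨le_rfl, zero_le_one⟩
    · apply preMble_smul hB hg (by exact_mod_cast hmpos)
      intro x
      have hmR : (m:ℝ) ≤ (n:ℝ) := by exact_mod_cast hm
      calc (m:ℝ) * g x ≤ (m:ℝ) * (1/(n:ℝ)) :=
            mul_le_mul_of_nonneg_left (hle x) (by positivity)
        _ ≤ (n:ℝ) * (1/(n:ℝ)) := mul_le_mul_of_nonneg_right hmR (by positivity)
        _ = 1 := by field_simp
  have mult : ∀ m : ℕ, m ≤ n → I (fun x => (m:ℝ) * g x) = (m:ℝ) * I g := by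
    intro m
    induction m with
    | zero =>
        intro _
        rw [show (fun x => ((0:ℕ):ℝ) * g x) = fun _ => (0:ℝ) from funext fun x => by
          push_cast; ring]
        rw [I_zero hB hadd]; push_cast; ring
    | succ m ihm =>
        intro hm
        have hm' : m ≤ n := Nat.le_of_succ_le hm
        have hI := hadd (fun x => (m:ℝ) * g x) g (pm m hm') hg (by
          rw [show (fun x => (fun x => (m:ℝ) * g x) x + g x)
              = (fun x => ((m+1:ℕ):ℝ) * g x) from funext fun x => by push_cast; ring]
          exact pm (m+1) hm)
        rw [show (fun x => (fun x => (m:ℝ) * g x) x + g x)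
            = (fun x => ((m+1:ℕ):ℝ) * g x) from funext fun x => by push_cast; ring] at hI
        rw [hI, ihm hm']
        push_cast; ring
  have hfin := (hI01 _ (pm n le_rfl)).2
  rw [mult n le_rfl] at hfin
  rw [le_div_iff₀ hnR]
  nlinarith [hfin]

end Ilemmas2
private lemma approx_exists {B : Set (Set X)} (hB : IsSetAlg B) {f : X → ℝ}
    (hf : PreMble B f) (n : ℕ) (hn : 0 < n) :
    ∃ (a : Fin n → ℝ) (A : Fin n → Set X),
      (∀ k, a k ∈ Set.Icc (0:ℝ) 1) ∧ (∀ k, A k ∈ B) ∧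
      (∀ x, simpleVal a A x ≤ f x) ∧ (∀ x, f x - simpleVal a A x ≤ 1/(n:ℝ)) := by
  classical
  have hnR : (0:ℝ) < (n:ℝ) := by exact_mod_cast hn
  refine ⟨fun k => ((k:ℕ):ℝ)/(n:ℝ),
    fun k => f ⁻¹' (Set.Ioo (((k:ℕ):ℝ)/(n:ℝ)) 2 ∩ (Set.Ioo ((((k:ℕ):ℝ)+1)/(n:ℝ)) 2)ᶜ),
    ?_, ?_, ?_, ?_⟩
  case refine_1 =>
    intro k
    constructor
    · positivity
    · rw [div_le_one hnR]
      have : (k:ℕ) < n := k.isLt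
      exact_mod_cast this.le
  case refine_2 =>
    intro k
    exact hf.2 _ (InGenAlg.inter _ _ (InGenAlg.basic _ ⟨_, _, rfl⟩)
      (InGenAlg.compl _ (InGenAlg.basic _ ⟨_, _, rfl⟩)))
  all_goals {
    intro x
    have hfx := hf.1 x
    have hf2 : f x < 2 := lt_of_le_of_lt hfx.2 (by norm_num)
    have hmem : ∀ k : Fin n,
        (x ∈ f ⁻¹' (Set.Ioo (((k:ℕ):ℝ)/(n:ℝ)) 2 ∩ (Set.Ioo ((((k:ℕ):ℝ)+1)/(n:ℝ)) 2)ᶜ))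
          ↔ (((k:ℕ):ℝ)/(n:ℝ) < f x ∧ f x ≤ (((k:ℕ):ℝ)+1)/(n:ℝ)) := by
      intro k
      simp only [Set.mem_preimage, Set.mem_inter_iff, Set.mem_Ioo, Set.mem_compl_iff,
        not_and, not_lt]
      constructor
      · rintro ⟨⟨hk1, _⟩, hk2⟩
        exact ⟨hk1, le_of_not_gt (fun hcon => absurd hf2 (not_lt.mpr (hk2 hcon)))⟩
      · rintro ⟨hk1, hk2⟩
        exact ⟨⟨hk1, hf2⟩, fun hcon => absurd hcon (not_lt.mpr hk2)⟩
    by_cases h0 : f x ≤ 0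
    · have hfx0 : f x = 0 := le_antisymm h0 hfx.1
      have hnone : ∀ k : Fin n, x ∉ f ⁻¹' (Set.Ioo (((k:ℕ):ℝ)/(n:ℝ)) 2
          ∩ (Set.Ioo ((((k:ℕ):ℝ)+1)/(n:ℝ)) 2)ᶜ) := by
        intro k hk
        rw [hmem k] at hk
        have : (0:ℝ) ≤ ((k:ℕ):ℝ)/(n:ℝ) := by positivity
        rw [hfx0] at hk
        linarith [hk.1]
      have hval : simpleVal (fun k : Fin n => ((k:ℕ):ℝ)/(n:ℝ))
          (fun k : Fin n => f ⁻¹' (Set.Ioo (((k:ℕ):ℝ)/(n:ℝ)) 2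
            ∩ (Set.Ioo ((((k:ℕ):ℝ)+1)/(n:ℝ)) 2)ᶜ)) x = 0 := by
        rw [simpleVal]
        apply Finset.sum_eq_zero
        intro k _
        rw [Set.indicator_of_notMem (hnone k)]
        ring
      rw [hval, hfx0]
      all_goals (rw [sub_zero]; positivity)
    · push_neg at h0
      set c := f x with hc
      have hNc0 : (0:ℝ) < (n:ℝ) * c := by positivity
      have hceil1 : 1 ≤ ⌈(n:ℝ) * c⌉₊ := Nat.one_le_iff_ne_zero.mpr
        (by
          intro hz
          have := Nat.ceil_eq_zero.mp hz
          linarith)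
      set m : ℕ := ⌈(n:ℝ) * c⌉₊ - 1 with hm
      have hmsucc : m + 1 = ⌈(n:ℝ) * c⌉₊ := Nat.succ_pred_eq_of_pos hceil1
      have hmcast : (m:ℝ) + 1 = (⌈(n:ℝ) * c⌉₊ : ℝ) := by exact_mod_cast hmsucc
      have hceilN : ⌈(n:ℝ) * c⌉₊ ≤ n := Nat.ceil_le.mpr (by nlinarith [hfx.2])
      have hmn : m < n := by omega
      set k₀ : Fin n := ⟨m, hmn⟩ with hk₀
      have hmlow : (m:ℝ)/(n:ℝ) < c := by
        rw [div_lt_iff₀ hnR]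
        have := Nat.ceil_lt_add_one (le_of_lt hNc0)
        have h5 : (⌈(n:ℝ) * c⌉₊ : ℝ) < (n:ℝ) * c + 1 := this
        nlinarith [mul_comm c (n:ℝ)]
      have hmhigh : c ≤ ((m:ℝ)+1)/(n:ℝ) := by
        rw [le_div_iff₀ hnR]
        have := Nat.le_ceil ((n:ℝ) * c)
        nlinarith [mul_comm c (n:ℝ)]
      have hin : x ∈ f ⁻¹' (Set.Ioo (((k₀:ℕ):ℝ)/(n:ℝ)) 2
          ∩ (Set.Ioo ((((k₀:ℕ):ℝ)+1)/(n:ℝ)) 2)ᶜ) := by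
        rw [hmem k₀]
        exact ⟨hmlow, hmhigh⟩
      have hnotin : ∀ k : Fin n, k ≠ k₀ → x ∉ f ⁻¹' (Set.Ioo (((k:ℕ):ℝ)/(n:ℝ)) 2
          ∩ (Set.Ioo ((((k:ℕ):ℝ)+1)/(n:ℝ)) 2)ᶜ) := by
        intro k hk hkA
        rw [hmem k] at hkA
        have hkm : (k:ℕ) ≠ m := fun h => hk (Fin.ext h)
        rcases Nat.lt_or_ge (k:ℕ) m with hlt | hge
        · have h6 : ((k:ℕ):ℝ) + 1 ≤ (m:ℝ) := by exact_mod_cast Nat.succ_le_of_lt hlt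
          have h7 : (((k:ℕ):ℝ)+1)/(n:ℝ) ≤ (m:ℝ)/(n:ℝ) := by gcongr
          linarith [hkA.2, hmlow]
        · have hge' : m + 1 ≤ (k:ℕ) := by omega
          have h6 : (m:ℝ) + 1 ≤ ((k:ℕ):ℝ) := by exact_mod_cast hge'
          have h7 : ((m:ℝ)+1)/(n:ℝ) ≤ ((k:ℕ):ℝ)/(n:ℝ) := by gcongr
          linarith [hkA.1, hmhigh]
      have hval : simpleVal (fun k : Fin n => ((k:ℕ):ℝ)/(n:ℝ))
          (fun k : Fin n => f ⁻¹' (Set.Ioo (((k:ℕ):ℝ)/(n:ℝ)) 2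
            ∩ (Set.Ioo ((((k:ℕ):ℝ)+1)/(n:ℝ)) 2)ᶜ)) x = (m:ℝ)/(n:ℝ) := by
        rw [simpleVal]
        rw [Finset.sum_eq_single k₀]
        · rw [Set.indicator_of_mem hin]
          simp [hk₀]
        · intro k _ hk
          rw [Set.indicator_of_notMem (hnotin k hk)]
          ring
        · intro hk
          exact absurd (Finset.mem_univ k₀) hk
      rw [hval]
      first
        | linarith [hmlow]
        | (show c - (m:ℝ)/(n:ℝ) ≤ 1/(n:ℝ)
           have : ((m:ℝ)+1)/(n:ℝ) = (m:ℝ)/(n:ℝ) + 1/(n:ℝ) := by ring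
           linarith [hmhigh])
  }

/-- If `I : PreMble(X,[0,1]) → [0,1]` satisfies `I 1 = 1` and is
additive on sums that remain premeasurable into `[0,1]`, then there is a unique
finitely additive probability premeasure `P` on `B` with `I = I_P`. -/
theorem exists_unique_finAddProb_of_additive (B : Set (Set X)) (hB : IsSetAlg B)
    (I : (X → ℝ) → ℝ)
    (hI01 : ∀ f, PreMble B f → I f ∈ Set.Icc (0 : ℝ) 1)
    (h1 : I (fun _ => 1) = 1)
    (hadd : ∀ f g : X → ℝ, PreMble B f → PreMble B g →
      PreMble B (fun x => f x + g x) →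
      I (fun x => f x + g x) = I f + I g) :
    ∃ P : Set X → ℝ,
      (IsFinAddProb B P ∧ ∀ f, PreMble B f → I f = Ilow B P f) ∧
      ∀ Q : Set X → ℝ,
        (IsFinAddProb B Q ∧ ∀ f, PreMble B f → I f = Ilow B Q f) →
        ∀ A ∈ B, Q A = P A := by
  classical
  set P : Set X → ℝ := fun A => I (fun x => A.indicator (fun _ => (1:ℝ)) x) with hPdef
  have hind1 : ∀ A : Set X, ∀ x, A.indicator (fun _ => (1:ℝ)) x ≤ 1 :=
    fun A x => (indicator_mem_Icc A x).2
  -- P is a finitely additive probability premeasure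
  have hP : IsFinAddProb B P := by
    constructor
    · intro A hA
      exact hI01 _ (preMble_indicator hB hA)
    · show I (fun x => (Set.univ).indicator (fun _ => (1:ℝ)) x) = 1
      rw [show (fun x : X => (Set.univ).indicator (fun _ => (1:ℝ)) x) = (fun _ => (1:ℝ))
        from funext fun x => by simp]
      exact h1
    · intro A hA C hC hdis
      have heq : (fun x => A.indicator (fun _ => (1:ℝ)) x + C.indicator (fun _ => (1:ℝ)) x)
          = (fun x => (A ∪ C).indicator (fun _ => (1:ℝ)) x) := by
        funext x
        by_cases hxA : x ∈ A <;> by_cases hxC : x ∈ C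
        · exact absurd hxC (Set.disjoint_left.mp hdis hxA)
        · simp [hxA, hxC]
        · simp [hxA, hxC]
        · simp [hxA, hxC]
      have hpm := hadd _ _ (preMble_indicator hB hA) (preMble_indicator hB hC) (by
        rw [heq]; exact preMble_indicator hB (setAlg_union hB hA hC))
      rw [heq] at hpm
      show I (fun x => (A ∪ C).indicator (fun _ => (1:ℝ)) x) = _
      rw [hpm]
  -- I f = Ilow B P f for all premeasurable f
  have hIlow : ∀ f, PreMble B f → I f = Ilow B P f := by
    intro f hf
    set S : Set ℝ := {r | ∃ (n : ℕ) (a : Fin n → ℝ) (A : Fin n → Set X),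
      (∀ k, a k ∈ Set.Icc (0 : ℝ) 1) ∧ (∀ k, A k ∈ B) ∧
      (∀ x, simpleVal a A x ≤ f x) ∧ r = JRep P a A} with hSdef
    have hIlow_eq : Ilow B P f = sSup S := rfl
    have key1 : ∀ r ∈ S, r ≤ I f := by
      rintro r ⟨n, a, A, ha, hA, hle, rfl⟩
      have hs_le1 : ∀ x, simpleVal a A x ≤ 1 := fun x => (hle x).trans (hf.1 x).2
      have hIs : I (simpleVal a A) = JRep P a A := by
        rw [I_simpleVal hB hI01 hadd n a A ha hA hs_le1]
        rfl
      have pm_s : PreMble B (simpleVal a A) :=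
        preMble_simpleVal hB (fun k => (ha k).1) hA hs_le1
      have pm_d : PreMble B (fun x => f x - simpleVal a A x) :=
        preMble_sub_simpleVal hB n a A (fun k => (ha k).1) hA f hf hle
      have hsplit := hadd (simpleVal a A) (fun x => f x - simpleVal a A x) pm_s pm_d (by
        rw [show (fun x => simpleVal a A x + (f x - simpleVal a A x)) = f
          from funext fun x => by ring]
        exact hf)
      rw [show (fun x => simpleVal a A x + (f x - simpleVal a A x)) = f
        from funext fun x => by ring] at hsplit
      have hd_nonneg := (hI01 _ pm_d).1
      rw [hsplit, hIs] at *
      linarith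
    have h0S : (0:ℝ) ∈ S := by
      refine ⟨0, Fin.elim0, Fin.elim0, fun k => k.elim0, fun k => k.elim0, ?_, ?_⟩
      · intro x
        simpa [simpleVal] using (hf.1 x).1
      · simp [JRep]
    have hbdd : BddAbove S := ⟨I f, key1⟩
    rw [hIlow_eq]
    apply le_antisymm
    · apply le_of_forall_pos_le_add
      intro ε hε
      obtain ⟨n, hn⟩ := exists_nat_one_div_lt hε
      obtain ⟨a, A, ha, hA, hle1, hle2⟩ := approx_exists hB hf (n+1) (Nat.succ_pos n)
      have hs_le1 : ∀ x, simpleVal a A x ≤ 1 := fun x => (hle1 x).trans (hf.1 x).2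
      have hJ : JRep P a A ∈ S := ⟨n+1, a, A, ha, hA, hle1, rfl⟩
      have hIs : I (simpleVal a A) = JRep P a A := by
        rw [I_simpleVal hB hI01 hadd (n+1) a A ha hA hs_le1]
        rfl
      have pm_s : PreMble B (simpleVal a A) :=
        preMble_simpleVal hB (fun k => (ha k).1) hA hs_le1
      have pm_d : PreMble B (fun x => f x - simpleVal a A x) :=
        preMble_sub_simpleVal hB (n+1) a A (fun k => (ha k).1) hA f hf hle1
      have hsplit := hadd (simpleVal a A) (fun x => f x - simpleVal a A x) pm_s pm_d (by
        rw [show (fun x => simpleVal a A x + (f x - simpleVal a A x)) = f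
          from funext fun x => by ring]
        exact hf)
      rw [show (fun x => simpleVal a A x + (f x - simpleVal a A x)) = f
        from funext fun x => by ring] at hsplit
      have hds : I (fun x => f x - simpleVal a A x) ≤ 1/(((n:ℝ))+1) := by
        have := I_small hB hI01 hadd pm_d (Nat.succ_pos n) (fun x => by
          have := hle2 x
          push_cast at this ⊢
          linarith)
        push_cast at this
        linarith
      calc I f = I (simpleVal a A) + I (fun x => f x - simpleVal a A x) := hsplit
        _ ≤ JRep P a A + 1/(((n:ℝ))+1) := by rw [hIs]; linarith
        _ ≤ sSup S + ε := add_le_add (le_csSup hbdd hJ) hn.le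
    · exact csSup_le ⟨0, h0S⟩ key1
  refine ⟨P, ⟨hP, hIlow⟩, ?_⟩
  -- uniqueness
  rintro Q ⟨hQ, hQI⟩ A hA
  have hbdd1 : BddAbove {r | ∃ (n : ℕ) (a : Fin n → ℝ) (A : Fin n → Set X),
      (∀ k, a k ∈ Set.Icc (0 : ℝ) 1) ∧ (∀ k, A k ∈ B) ∧
      (∀ x, simpleVal a A x ≤ (fun _ : X => (1:ℝ)) x) ∧ r = JRep Q a A} := by
    by_contra hnb
    have h1' : I (fun _ : X => (1:ℝ)) = Ilow B Q (fun _ : X => (1:ℝ)) :=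
      hQI _ (preMble_const hB ⟨zero_le_one, le_rfl⟩)
    rw [show Ilow B Q (fun _ : X => (1:ℝ)) = sSup _ from rfl,
      Real.sSup_of_not_bddAbove hnb, h1] at h1'
    norm_num at h1'
  have key : ∀ D, D ∈ B → Q D ≤ I (fun x => D.indicator (fun _ => (1:ℝ)) x) := by
    intro D hD
    have hQD : I (fun x => D.indicator (fun _ => (1:ℝ)) x)
        = Ilow B Q (fun x => D.indicator (fun _ => (1:ℝ)) x) :=
      hQI _ (preMble_indicator hB hD)
    have hQD_mem : Q D ∈ {r | ∃ (n : ℕ) (a : Fin n → ℝ) (A : Fin n → Set X),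
        (∀ k, a k ∈ Set.Icc (0 : ℝ) 1) ∧ (∀ k, A k ∈ B) ∧
        (∀ x, simpleVal a A x ≤ D.indicator (fun _ => (1:ℝ)) x) ∧ r = JRep Q a A} := by
      refine ⟨1, fun _ => 1, fun _ => D, fun k => ⟨zero_le_one, le_rfl⟩, fun k => hD, ?_, ?_⟩
      · intro x
        simp [simpleVal, Fin.sum_univ_one]
      · simp [JRep, Fin.sum_univ_one]
    have hsub : {r | ∃ (n : ℕ) (a : Fin n → ℝ) (A : Fin n → Set X),
        (∀ k, a k ∈ Set.Icc (0 : ℝ) 1) ∧ (∀ k, A k ∈ B) ∧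
        (∀ x, simpleVal a A x ≤ D.indicator (fun _ => (1:ℝ)) x) ∧ r = JRep Q a A}
        ⊆ {r | ∃ (n : ℕ) (a : Fin n → ℝ) (A : Fin n → Set X),
        (∀ k, a k ∈ Set.Icc (0 : ℝ) 1) ∧ (∀ k, A k ∈ B) ∧
        (∀ x, simpleVal a A x ≤ (fun _ : X => (1:ℝ)) x) ∧ r = JRep Q a A} := by
      rintro r ⟨n, a, A', ha, hA', hle, hr⟩
      exact ⟨n, a, A', ha, hA', fun x => (hle x).trans (hind1 D x), hr⟩
    have hbddD := hbdd1.mono hsub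
    calc Q D ≤ sSup {r | ∃ (n : ℕ) (a : Fin n → ℝ) (A : Fin n → Set X),
        (∀ k, a k ∈ Set.Icc (0 : ℝ) 1) ∧ (∀ k, A k ∈ B) ∧
        (∀ x, simpleVal a A x ≤ D.indicator (fun _ => (1:ℝ)) x) ∧ r = JRep Q a A} :=
          le_csSup hbddD hQD_mem
      _ = I (fun x => D.indicator (fun _ => (1:ℝ)) x) := hQD.symm
  have h1A := key A hA
  have h2A := key Aᶜ (hB.compl_mem _ hA)
  have hsumI : I (fun x => A.indicator (fun _ => (1:ℝ)) x)
      + I (fun x => Aᶜ.indicator (fun _ => (1:ℝ)) x) = 1 := by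
    have heq : (fun x => A.indicator (fun _ => (1:ℝ)) x + Aᶜ.indicator (fun _ => (1:ℝ)) x)
        = (fun _ : X => (1:ℝ)) := by
      funext x
      by_cases hx : x ∈ A <;> simp [hx]
    have h := hadd _ _ (preMble_indicator hB hA) (preMble_indicator hB (hB.compl_mem _ hA)) (by
      rw [heq]; exact preMble_const hB ⟨zero_le_one, le_rfl⟩)
    rw [heq, h1] at h
    linarith
  have hsumQ : Q A + Q Aᶜ = 1 := by
    have h := hQ.add A hA Aᶜ (hB.compl_mem _ hA) disjoint_compl_right
    rw [Set.union_compl_self, hQ.univ_one] at h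
    linarith
  have : Q A = I (fun x => A.indicator (fun _ => (1:ℝ)) x) :=
    le_antisymm h1A (by linarith)
  exact this
end

section
/- Let X be a measurable space and let I : Mble(X,[0,1]) → [0,1] satisfy I(1) = 1 and I(∑_{n=1}^∞ f_n) = ∑_{n=1}^∞ I(f_n) for every sequence of measurable maps f_n : X → [0,1] with ∑_{n=1}^∞ f_n ≤ 1 pointwise. Then there exists a unique probability measure P on X such that I(f) = ∫_X f dP for all measurable f : X → [0,1]. -/
open MeasureTheory
open scoped ENNReal NNReal

noncomputable def dig (n : ℕ) (y : ℝ) : ℤ := ⌊y * 2^(n+1)⌋ - 2 * ⌊y * 2^n⌋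

lemma dig_cases (n : ℕ) (y : ℝ) : dig n y = 0 ∨ dig n y = 1 := by
  have h1 : 2 * ⌊y * 2^n⌋ ≤ ⌊y * 2^(n+1)⌋ := by
    rw [Int.le_floor]
    push_cast
    rw [pow_succ]
    have := Int.floor_le (y * 2^n)
    nlinarith
  have h2 : ⌊y * 2^(n+1)⌋ < 2 * ⌊y * 2^n⌋ + 2 := by
    rw [Int.floor_lt]
    push_cast
    rw [pow_succ]
    have := Int.lt_floor_add_one (y * 2^n)
    nlinarith
  unfold dig; omega

lemma dig_term (k : ℕ) (y : ℝ) :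
    (dig k y : ℝ) / 2^(k+1) = (⌊y * 2^(k+1)⌋ : ℝ) / 2^(k+1) - (⌊y * 2^k⌋ : ℝ) / 2^k := by
  unfold dig
  push_cast
  field_simp
  ring

lemma dig_hasSum {y : ℝ} (hy : y ∈ Set.Ico (0:ℝ) 1) :
    HasSum (fun n => (dig n y : ℝ) / 2^(n+1)) y := by
  obtain ⟨hy0, hy1⟩ := hy
  have hnn : ∀ n, (0:ℝ) ≤ (dig n y : ℝ) / 2^(n+1) := by
    intro n
    rcases dig_cases n y with h | h <;> rw [h] <;> positivity
  rw [hasSum_iff_tendsto_nat_of_nonneg hnn]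
  have hps : ∀ n, ∑ i ∈ Finset.range n, (dig i y : ℝ) / 2^(i+1)
      = (⌊y * 2^n⌋ : ℝ) / 2^n := by
    intro n
    have := Finset.sum_range_sub (fun n => (⌊y * 2^n⌋ : ℝ) / 2^n) n
    simp only [dig_term]
    rw [this]
    have h0 : (⌊y * 2^0⌋ : ℝ) = 0 := by
      rw [pow_zero, mul_one, Int.floor_eq_zero_iff.2 (Set.mem_Ico.2 ⟨hy0, hy1⟩)]
      norm_num
    rw [h0]
    norm_num
  simp only [hps]
  have hle : ∀ n : ℕ, (⌊y * 2^n⌋ : ℝ) / 2^n ≤ y := by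
    intro n
    rw [div_le_iff₀ (by positivity)]
    exact Int.floor_le _
  have hge : ∀ n : ℕ, y - (2:ℝ)⁻¹^n ≤ (⌊y * 2^n⌋ : ℝ) / 2^n := by
    intro n
    rw [le_div_iff₀ (by positivity)]
    have := Int.lt_floor_add_one (y * 2^n)
    have h2 : (0:ℝ) < 2^n := by positivity
    have : (2:ℝ)⁻¹^n * 2^n = 1 := by
      rw [← mul_pow]; norm_num
    nlinarith [Int.lt_floor_add_one (y * 2^n)]
  have h1 : Filter.Tendsto (fun n : ℕ => y - (2:ℝ)⁻¹^n) Filter.atTop (nhds y) := by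
    have : Filter.Tendsto (fun n : ℕ => (2:ℝ)⁻¹^n) Filter.atTop (nhds 0) :=
      tendsto_pow_atTop_nhds_zero_of_lt_one (by norm_num) (by norm_num)
    simpa using (tendsto_const_nhds.sub this)
  exact tendsto_of_tendsto_of_tendsto_of_le_of_le h1 tendsto_const_nhds hge hle

lemma measurable_dig (n : ℕ) : Measurable fun y : ℝ => dig n y := by
  unfold dig
  exact ((measurable_id.mul_const _).floor).sub
    (((measurable_id.mul_const _).floor).const_mul 2)

/-- If `I : Mble(X,[0,1]) → [0,1]` satisfies `I 1 = 1` and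
`I (∑ₙ fₙ) = ∑ₙ I fₙ` for every sequence of measurable maps `fₙ : X → [0,1]`
with `∑ₙ fₙ ≤ 1` pointwise, then there is a unique probability measure `P` on
`X` with `I f = ∫ f dP` for all measurable `f : X → [0,1]`. -/
theorem exists_unique_probabilityMeasure_of_countably_additive
    {X : Type*} [MeasurableSpace X] (I : (X → ℝ) → ℝ)
    (hI01 : ∀ f : X → ℝ, Measurable f → (∀ x, f x ∈ Set.Icc (0 : ℝ) 1) →
      I f ∈ Set.Icc (0 : ℝ) 1)
    (h1 : I (fun _ => 1) = 1)
    (hadd : ∀ f : ℕ → X → ℝ, (∀ n, Measurable (f n)) →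
      (∀ n x, f n x ∈ Set.Icc (0 : ℝ) 1) →
      (∀ x, Summable fun n => f n x) →
      (∀ x, (∑' n, f n x) ≤ 1) →
      HasSum (fun n => I (f n)) (I (fun x => ∑' n, f n x))) :
    ∃! P : Measure X, IsProbabilityMeasure P ∧
      ∀ f : X → ℝ, Measurable f → (∀ x, f x ∈ Set.Icc (0 : ℝ) 1) →
        I f = ∫ x, f x ∂P := by
  classical
  set ind : Set X → X → ℝ := fun A => A.indicator 1 with hind_def
  have hind_mem : ∀ (A : Set X) x, ind A x ∈ Set.Icc (0:ℝ) 1 := by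
    intro A x
    by_cases hx : x ∈ A <;> simp [hind_def, Set.indicator, hx]
  have hind_meas : ∀ (A : Set X), MeasurableSet A → Measurable (ind A) := by
    intro A hA
    exact (measurable_one.indicator hA)
  -- I of zero
  have hI0 : I (fun _ : X => (0:ℝ)) = 0 := by
    have h := hadd (fun _ _ => 0) (fun _ => measurable_const)
      (by intro n x; simp) (fun x => summable_zero) (by intro x; simp)
    exact (summable_const_iff _).1 h.summable
  -- pairwise additivity
  have hpair : ∀ f g : X → ℝ, Measurable f → Measurable g →
      (∀ x, f x ∈ Set.Icc (0:ℝ) 1) → (∀ x, g x ∈ Set.Icc (0:ℝ) 1) →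
      (∀ x, f x + g x ≤ 1) → I (fun x => f x + g x) = I f + I g := by
    intro f g hf hg hf01 hg01 hfg
    set F : ℕ → X → ℝ := fun n => if n = 0 then f else if n = 1 then g else (fun _ => 0) with hF
    have hFm : ∀ n, Measurable (F n) := by
      intro n; simp only [hF]; split_ifs
      exacts [hf, hg, measurable_const]
    have hF01 : ∀ n x, F n x ∈ Set.Icc (0:ℝ) 1 := by
      intro n x; simp only [hF]; split_ifs
      exacts [hf01 x, hg01 x, by simp]
    have hFz : ∀ n ∉ ({0,1} : Finset ℕ), F n = (fun _ => (0:ℝ)) := by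
      intro n hn
      simp only [Finset.mem_insert, Finset.mem_singleton, not_or] at hn
      simp only [hF]; rw [if_neg hn.1, if_neg hn.2]
    have hFzx : ∀ x, ∀ n ∉ ({0,1} : Finset ℕ), F n x = 0 := fun x n hn => by
      rw [hFz n hn]
    have htsum : ∀ x, (∑' n, F n x) = f x + g x := by
      intro x
      rw [tsum_eq_sum (hFzx x)]
      simp [hF]
    have h := hadd F hFm hF01 (fun x => summable_of_ne_finset_zero (hFzx x))
      (fun x => by rw [htsum x]; exact hfg x)
    rw [funext htsum] at h
    have h2 : HasSum (fun n => I (F n)) (I f + I g) := by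
      have h3 := hasSum_sum_of_ne_finset_zero
        (f := fun n => I (F n)) (s := ({0,1} : Finset ℕ)) (L := SummationFilter.unconditional ℕ)
        (fun n hn => by show I (F n) = 0; rw [hFz n hn]; exact hI0)
      have hs : ∑ n ∈ ({0,1} : Finset ℕ), I (F n) = I f + I g := by
        rw [Finset.sum_insert (by norm_num), Finset.sum_singleton]
        norm_num [hF]
      rwa [hs] at h3
    exact h.unique h2
  -- scaling by natural numbers
  have hsmul : ∀ (m : ℕ), ∀ g : X → ℝ, Measurable g → (∀ x, g x ∈ Set.Icc (0:ℝ) 1) →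
      (∀ x, (m:ℝ) * g x ≤ 1) → I (fun x => (m:ℝ) * g x) = m * I g := by
    intro m g hg hg01 hmg
    set F : ℕ → X → ℝ := fun n => if n < m then g else (fun _ => 0) with hF
    have hFz : ∀ n ∉ Finset.range m, F n = (fun _ => (0:ℝ)) := by
      intro n hn
      simp only [hF]
      rw [if_neg (by simpa using hn)]
    have hFzx : ∀ x, ∀ n ∉ Finset.range m, F n x = 0 := fun x n hn => by rw [hFz n hn]
    have hFval : ∀ n ∈ Finset.range m, F n = g := by
      intro n hn
      simp only [hF]
      rw [if_pos (Finset.mem_range.1 hn)]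
    have htsum : ∀ x, (∑' n, F n x) = (m:ℝ) * g x := by
      intro x
      rw [tsum_eq_sum (hFzx x)]
      rw [Finset.sum_congr rfl (fun n hn => by rw [hFval n hn])]
      rw [Finset.sum_const, Finset.card_range, nsmul_eq_mul]
    have hFm : ∀ n, Measurable (F n) := by
      intro n; simp only [hF]; split_ifs
      exacts [hg, measurable_const]
    have hF01 : ∀ n x, F n x ∈ Set.Icc (0:ℝ) 1 := by
      intro n x; simp only [hF]; split_ifs
      exacts [hg01 x, by simp]
    have h := hadd F hFm hF01 (fun x => summable_of_ne_finset_zero (hFzx x))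
      (fun x => by rw [htsum x]; exact hmg x)
    rw [funext htsum] at h
    have h2 : HasSum (fun n => I (F n)) (m * I g) := by
      have h3 := hasSum_sum_of_ne_finset_zero
        (f := fun n => I (F n)) (s := Finset.range m) (L := SummationFilter.unconditional ℕ)
        (fun n hn => by show I (F n) = 0; rw [hFz n hn]; exact hI0)
      have hs : ∑ n ∈ Finset.range m, I (F n) = m * I g := by
        rw [Finset.sum_congr rfl (fun n hn => by rw [hFval n hn])]
        rw [Finset.sum_const, Finset.card_range, nsmul_eq_mul]
      rwa [hs] at h3
    exact h.unique h2
  -- countable additivity on indicators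
  have hmU : ∀ ⦃A : ℕ → Set X⦄, (∀ i, MeasurableSet (A i)) → Pairwise (Function.onFun Disjoint A) →
      HasSum (fun i => I (ind (A i))) (I (ind (⋃ i, A i))) := by
    intro A hA hdisj
    have key : ∀ x, HasSum (fun n => ind (A n) x) (ind (⋃ i, A i) x) := by
      intro x
      by_cases hx : x ∈ ⋃ i, A i
      · obtain ⟨i0, hi0⟩ := Set.mem_iUnion.1 hx
        have hz : ∀ n ≠ i0, ind (A n) x = 0 := by
          intro n hn
          have hxn : x ∉ A n := fun hxn => Set.disjoint_left.1 (hdisj hn) hxn hi0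
          simp [hind_def, Set.indicator_of_notMem hxn]
        have h4 := hasSum_single (f := fun n => ind (A n) x) i0 hz
        simpa [hind_def, Set.indicator_of_mem hi0, Set.indicator_of_mem hx] using h4
      · have hz : ∀ n, ind (A n) x = 0 := fun n =>
          Set.indicator_of_notMem (fun h => hx (Set.mem_iUnion.2 ⟨n, h⟩)) _
        have : ind (⋃ i, A i) x = 0 := Set.indicator_of_notMem hx _
        rw [this]
        exact hasSum_zero.congr_fun hz
    have h := hadd (fun n => ind (A n)) (fun n => hind_meas _ (hA n)) (fun n x => hind_mem _ x)
      (fun x => (key x).summable) (fun x => by rw [(key x).tsum_eq]; exact (hind_mem _ x).2)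
    have heq : (fun x => ∑' n, ind (A n) x) = ind (⋃ i, A i) := funext fun x => (key x).tsum_eq
    rwa [heq] at h
  -- the measure
  set P : Measure X := Measure.ofMeasurable (fun s _ => ENNReal.ofReal (I (ind s)))
    (by
      have he : ind (∅ : Set X) = fun _ => 0 := by funext x; simp [hind_def]
      simp only [he, hI0, ENNReal.ofReal_zero])
    (by
      intro A hA hdisj
      have h := hmU hA hdisj
      show ENNReal.ofReal (I (ind (⋃ i, A i))) = ∑' i, ENNReal.ofReal (I (ind (A i)))
      rw [← h.tsum_eq]
      exact ENNReal.ofReal_tsum_of_nonneg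
        (fun n => (hI01 _ (hind_meas _ (hA n)) (hind_mem _)).1) h.summable) with hP_def
  have hP : ∀ A : Set X, MeasurableSet A → P A = ENNReal.ofReal (I (ind A)) :=
    fun A hA => Measure.ofMeasurable_apply A hA
  have hPtoReal : ∀ A : Set X, MeasurableSet A → (P A).toReal = I (ind A) := by
    intro A hA
    rw [hP A hA, ENNReal.toReal_ofReal (hI01 _ (hind_meas _ hA) (hind_mem _)).1]
  have hPprob : IsProbabilityMeasure P := by
    constructor
    rw [hP _ MeasurableSet.univ]
    have hu : ind (Set.univ : Set X) = fun _ => 1 := by funext x; simp [hind_def]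
    rw [hu, h1, ENNReal.ofReal_one]
  haveI := hPprob
  -- indicator integrals
  have hindint : ∀ (Q : Measure X), ∀ (A : Set X), MeasurableSet A →
      ∫ x, ind A x ∂Q = (Q A).toReal := by
    intro Q A hA
    exact integral_indicator_one hA
  -- the main identity
  have hmain : ∀ f : X → ℝ, Measurable f → (∀ x, f x ∈ Set.Icc (0:ℝ) 1) →
      I f = ∫ x, f x ∂P := by
    intro f hf hf01
    set E : Set X := f ⁻¹' {1} with hE_def
    have hE : MeasurableSet E := hf (measurableSet_singleton 1)
    set h : X → ℝ := fun x => if f x = 1 then 0 else f x with hh_def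
    have hhm : Measurable h :=
      Measurable.ite (hf (measurableSet_singleton 1)) measurable_const hf
    have hh01 : ∀ x, h x ∈ Set.Ico (0:ℝ) 1 := by
      intro x
      simp only [hh_def]
      split_ifs with hx
      · constructor <;> norm_num
      · exact ⟨(hf01 x).1, lt_of_le_of_ne (hf01 x).2 hx⟩
    have hh01' : ∀ x, h x ∈ Set.Icc (0:ℝ) 1 :=
      fun x => ⟨(hh01 x).1, le_of_lt (hh01 x).2⟩
    have hsplit : ∀ x, f x = ind E x + h x := by
      intro x
      by_cases hx : f x = 1
      · have hxE : x ∈ E := hx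
        simp [hind_def, Set.indicator_of_mem hxE, hh_def, hx]
      · have hxE : x ∉ E := hx
        simp [hind_def, Set.indicator_of_notMem hxE, hh_def, hx]
    -- dyadic sets
    set A : ℕ → Set X := fun n => (fun x => dig n (h x)) ⁻¹' {1} with hA_def
    have hAmeas : ∀ n, MeasurableSet (A n) := fun n =>
      ((measurable_dig n).comp hhm) (measurableSet_singleton 1)
    set g : ℕ → X → ℝ := fun n x => (2:ℝ)⁻¹^(n+1) * ind (A n) x with hg_def
    have hgm : ∀ n, Measurable (g n) := fun n => (hind_meas _ (hAmeas n)).const_mul _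
    have hgeq : ∀ n x, g n x = (dig n (h x) : ℝ) / 2^(n+1) := by
      intro n x
      rcases dig_cases n (h x) with hd | hd
      · have hx : x ∉ A n := by simp [hA_def, hd]
        simp [hg_def, hind_def, Set.indicator_of_notMem hx, hd]
      · have hx : x ∈ A n := by simp [hA_def, hd]
        simp only [hg_def, hind_def, Set.indicator_of_mem hx, Pi.one_apply, mul_one, hd,
          Int.cast_one, one_div, inv_pow]
    have hc01 : ∀ n : ℕ, (2:ℝ)⁻¹^(n+1) ≤ 1 :=
      fun n => pow_le_one₀ (by norm_num) (by norm_num)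
    have hg01 : ∀ n x, g n x ∈ Set.Icc (0:ℝ) 1 := by
      intro n x
      obtain ⟨ha, hb⟩ := hind_mem (A n) x
      constructor
      · apply mul_nonneg _ ha
        positivity
      · calc (2:ℝ)⁻¹^(n+1) * ind (A n) x ≤ 1 * 1 :=
              mul_le_mul (hc01 n) hb ha zero_le_one
          _ = 1 := by norm_num
    have hgsum : ∀ x, HasSum (fun n => g n x) (h x) := by
      intro x
      have hd := dig_hasSum (hh01 x)
      exact hd.congr_fun (fun n => hgeq n x)
    have hIh := hadd g hgm hg01 (fun x => (hgsum x).summable)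
      (fun x => by rw [(hgsum x).tsum_eq]; exact (hh01' x).2)
    have hheq : (fun x => ∑' n, g n x) = h := funext fun x => (hgsum x).tsum_eq
    rw [hheq] at hIh
    -- value of I (g n)
    have hIgn : ∀ n, I (g n) = (2:ℝ)⁻¹^(n+1) * I (ind (A n)) := by
      intro n
      have hone : ∀ x, ((2^(n+1) : ℕ) : ℝ) * g n x = ind (A n) x := by
        intro x
        simp only [hg_def]
        push_cast
        rw [← mul_assoc, ← mul_pow]
        norm_num
      have hbd : ∀ x, ((2^(n+1) : ℕ) : ℝ) * g n x ≤ 1 := by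
        intro x; rw [hone x]; exact (hind_mem _ x).2
      have h5 := hsmul (2^(n+1)) (g n) (hgm n) (hg01 n) hbd
      rw [funext hone] at h5
      have h2pos : (0:ℝ) < 2^(n+1) := by positivity
      have : ((2^(n+1) : ℕ) : ℝ) = 2^(n+1) := by push_cast; ring
      rw [this] at h5
      rw [inv_pow]
      field_simp
      linarith [h5]
    -- value of ∫ g n
    have hintg : ∀ n, ∫ x, g n x ∂P = (2:ℝ)⁻¹^(n+1) * I (ind (A n)) := by
      intro n
      simp only [hg_def]
      rw [integral_const_mul, hindint P _ (hAmeas n), hPtoReal _ (hAmeas n)]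
    -- swap integral and tsum
    have hsumc : Summable (fun n : ℕ => (2:ℝ)⁻¹^(n+1)) := by
      have := (summable_geometric_of_lt_one (r := (2:ℝ)⁻¹) (by norm_num) (by norm_num))
      simpa [pow_succ] using this.mul_right (2:ℝ)⁻¹
    have hfin : ∑' n, ∫⁻ a, ‖g n a‖₊ ∂P ≠ ⊤ := by
      have hb : ∀ n, ∫⁻ a, ‖g n a‖₊ ∂P ≤ ENNReal.ofReal ((2:ℝ)⁻¹^(n+1)) := by
        intro n
        have hle : ∀ a, (‖g n a‖₊ : ℝ≥0∞) ≤ ENNReal.ofReal ((2:ℝ)⁻¹^(n+1)) := by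
          intro a
          rw [← Real.enorm_eq_ofReal (by positivity), enorm_eq_nnnorm]
          have h0 : 0 ≤ g n a := (hg01 n a).1
          have h1' : g n a ≤ (2:ℝ)⁻¹^(n+1) := by
            simp only [hg_def]
            calc (2:ℝ)⁻¹^(n+1) * ind (A n) a ≤ (2:ℝ)⁻¹^(n+1) * 1 := by
                  apply mul_le_mul_of_nonneg_left (hind_mem _ a).2 (by positivity)
              _ = (2:ℝ)⁻¹^(n+1) := by ring
          simp only [ENNReal.coe_le_coe]
          rw [Real.nnnorm_of_nonneg h0, Real.nnnorm_of_nonneg (by positivity)]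
          exact_mod_cast h1'
        calc ∫⁻ a, ‖g n a‖₊ ∂P ≤ ∫⁻ _, ENNReal.ofReal ((2:ℝ)⁻¹^(n+1)) ∂P :=
              lintegral_mono hle
          _ = ENNReal.ofReal ((2:ℝ)⁻¹^(n+1)) := by
              rw [lintegral_const, measure_univ, mul_one]
      refine ne_top_of_le_ne_top ?_ (ENNReal.tsum_le_tsum hb)
      rw [← ENNReal.ofReal_tsum_of_nonneg (fun n => by positivity) hsumc]
      exact ENNReal.ofReal_ne_top
    have hswap : ∫ x, h x ∂P = ∑' n, ∫ x, g n x ∂P := by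
      rw [← integral_tsum (fun n => (hgm n).aestronglyMeasurable) hfin]
      rw [show (fun x => ∑' n, g n x) = h from hheq]
    -- combine
    have hfI : I f = I (ind E) + I h := by
      have := hpair (ind E) h (hind_meas _ hE) hhm (hind_mem _) hh01'
        (fun x => by rw [← hsplit x]; exact (hf01 x).2)
      rw [show (fun x => ind E x + h x) = f from funext fun x => (hsplit x).symm] at this
      exact this
    have hintble : ∀ u : X → ℝ, Measurable u → (∀ x, u x ∈ Set.Icc (0:ℝ) 1) →
        Integrable u P := by
      intro u hu h01
      refine (integrable_const (1:ℝ)).mono hu.aestronglyMeasurable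
        (ae_of_all _ fun x => ?_)
      rw [Real.norm_of_nonneg (h01 x).1, norm_one]
      exact (h01 x).2
    have hfint : ∫ x, f x ∂P = ∫ x, ind E x ∂P + ∫ x, h x ∂P := by
      rw [show f = (fun x => ind E x + h x) from funext hsplit]
      exact integral_add (hintble _ (hind_meas _ hE) (hind_mem _)) (hintble h hhm hh01')
    have hIhval : I h = ∫ x, h x ∂P := by
      rw [hswap, ← hIh.tsum_eq]
      exact tsum_congr fun n => by rw [hIgn n, hintg n]
    rw [hfI, hfint, hIhval, hindint P E hE, hPtoReal E hE]
  refine ⟨P, ⟨hPprob, hmain⟩, ?_⟩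
  rintro Q ⟨hQprob, hQint⟩
  refine Measure.ext fun s hs => ?_
  haveI := hQprob
  have hq : (Q s).toReal = (P s).toReal := by
    rw [← hindint Q s hs, ← hindint P s hs, ← hQint _ (hind_meas _ hs) (hind_mem _),
      ← hmain _ (hind_meas _ hs) (hind_mem _)]
  exact (ENNReal.toReal_eq_toReal_iff' (measure_ne_top Q s) (measure_ne_top P s)).1 hq
end

section
/- Let L be a weak integration lattice on a set X and I : L → [0,∞) a weak integration operator. Then for all f ∈ L and r ∈ [0,1], I(rf) = r·I(f). -/
variable {X : Type*}

/-- `ℕL = {n • f | n ∈ ℕ, f ∈ L}`. -/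
def natMul (L : Set (X → ℝ)) : Set (X → ℝ) :=
  {g | ∃ (n : ℕ) (f : X → ℝ), f ∈ L ∧ g = fun x => (n : ℝ) * f x}

/-- A weak integration lattice on `X`: a set of nonnegative-valued functions
containing `1`, closed under multiplication by scalars in `[0,1]`, and such
that `f ∨ g`, `f ∧ g`, `f ∨ g − f ∧ g` and `n f ∧ 1` lie in `ℕL`. -/
structure IsWeakIntLattice (L : Set (X → ℝ)) : Prop where
  nonneg : ∀ f ∈ L, ∀ x, 0 ≤ f x
  one_mem : (fun _ => (1 : ℝ)) ∈ L
  sup_mem : ∀ f ∈ L, ∀ g ∈ L, (fun x => max (f x) (g x)) ∈ natMul L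
  inf_mem : ∀ f ∈ L, ∀ g ∈ L, (fun x => min (f x) (g x)) ∈ natMul L
  sub_mem : ∀ f ∈ L, ∀ g ∈ L,
    (fun x => max (f x) (g x) - min (f x) (g x)) ∈ natMul L
  nsmul_inf_one_mem : ∀ f ∈ L, ∀ n : ℕ,
    (fun x => min ((n : ℝ) * f x) 1) ∈ natMul L
  smul_mem : ∀ f ∈ L, ∀ r ∈ Set.Icc (0 : ℝ) 1, (fun x => r * f x) ∈ L

/-- A weak integration operator on `L`: nonnegative, `I 1 = 1`, and countably
additive on pointwise sums that remain in `L`. -/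
structure IsWeakIntOp (L : Set (X → ℝ)) (I : (X → ℝ) → ℝ) : Prop where
  nonneg : ∀ f ∈ L, 0 ≤ I f
  one : I (fun _ => 1) = 1
  countably_add : ∀ f : ℕ → X → ℝ, (∀ n, f n ∈ L) →
    (∀ x, Summable fun n => f n x) → (fun x => ∑' n, f n x) ∈ L →
    HasSum (fun n => I (f n)) (I (fun x => ∑' n, f n x))

section Aux

variable {L : Set (X → ℝ)} {I : (X → ℝ) → ℝ}

theorem aux_zero_mem (hL : IsWeakIntLattice L) : (fun _ : X => (0 : ℝ)) ∈ L := by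
  have := hL.smul_mem _ hL.one_mem 0 ⟨le_refl 0, zero_le_one⟩
  simpa using this

theorem aux_I_zero (hL : IsWeakIntLattice L) (hI : IsWeakIntOp L I) :
    I (fun _ => 0) = 0 := by
  have h0 := aux_zero_mem hL
  have hsum := hI.countably_add (fun _ => fun _ => 0) (fun _ => h0)
    (fun _ => summable_zero) (by simpa using h0)
  simp only [tsum_zero] at hsum
  exact tendsto_nhds_unique tendsto_const_nhds hsum.summable.tendsto_atTop_zero

/-- If `g ∈ L` and `n • g ∈ L` then `I (n • g) = n * I g`. -/
theorem aux_nat (hL : IsWeakIntLattice L) (hI : IsWeakIntOp L I)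
    {g : X → ℝ} (hg : g ∈ L) (n : ℕ) (hng : (fun x => (n : ℝ) * g x) ∈ L) :
    I (fun x => (n : ℝ) * g x) = n * I g := by
  set F : ℕ → X → ℝ := fun k => if k < n then g else fun _ => 0 with hF
  have hFL : ∀ k, F k ∈ L := by
    intro k
    by_cases h : k < n <;> simp [hF, h, hg, aux_zero_mem hL]
  have hsupp : ∀ x : X, ∀ k ∉ Finset.range n, F k x = 0 := by
    intro x k hk
    simp only [Finset.mem_range, not_lt] at hk
    simp [hF, Nat.not_lt.mpr hk]
  have htsum : ∀ x, (∑' k, F k x) = (n : ℝ) * g x := by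
    intro x
    rw [tsum_eq_sum (hsupp x)]
    have : ∀ k ∈ Finset.range n, F k x = g x := by
      intro k hk
      simp only [Finset.mem_range] at hk
      simp [hF, hk]
    rw [Finset.sum_congr rfl this, Finset.sum_const, Finset.card_range,
      nsmul_eq_mul]
  have hfun : (fun x => ∑' k, F k x) = fun x => (n : ℝ) * g x := funext htsum
  have hsummable : ∀ x, Summable fun k => F k x := fun x =>
    summable_of_ne_finset_zero (s := Finset.range n) (hsupp x)
  have hsum := hI.countably_add F hFL hsummable (by rw [hfun]; exact hng)
  rw [hfun] at hsum
  have hIF : ∀ k ∉ Finset.range n, I (F k) = 0 := by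
    intro k hk
    simp only [Finset.mem_range, not_lt] at hk
    have : F k = fun _ => 0 := by simp [hF, Nat.not_lt.mpr hk]
    rw [this, aux_I_zero hL hI]
  have hsum2 : HasSum (fun k => I (F k)) (∑ k ∈ Finset.range n, I (F k)) :=
    hasSum_sum_of_ne_finset_zero hIF
  have : (∑ k ∈ Finset.range n, I (F k)) = (n : ℝ) * I g := by
    have : ∀ k ∈ Finset.range n, I (F k) = I g := by
      intro k hk
      simp only [Finset.mem_range] at hk
      simp [hF, hk]
    rw [Finset.sum_congr rfl this, Finset.sum_const, Finset.card_range,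
      nsmul_eq_mul]
  rw [this] at hsum2
  exact hsum.unique hsum2

/-- Rational homogeneity: `I ((m/n) • f) = (m/n) * I f` for `m ≤ n`. -/
theorem aux_rat (hL : IsWeakIntLattice L) (hI : IsWeakIntOp L I)
    {f : X → ℝ} (hf : f ∈ L) (m n : ℕ) (hn : 0 < n) (hm : m ≤ n) :
    I (fun x => ((m : ℝ) / n) * f x) = ((m : ℝ) / n) * I f := by
  have hn' : (0 : ℝ) < n := by exact_mod_cast hn
  have hg : (fun x => (1 / (n : ℝ)) * f x) ∈ L := by
    refine hL.smul_mem f hf _ ⟨by positivity, ?_⟩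
    rw [div_le_one hn']
    exact_mod_cast hn
  set g : X → ℝ := fun x => (1 / (n : ℝ)) * f x with hgdef
  have h1 : (fun x => (n : ℝ) * g x) = f := by
    funext x; simp only [hgdef]; field_simp
  have hIf : I f = n * I g := by
    have := aux_nat hL hI hg n (by rw [h1]; exact hf)
    rw [h1] at this; exact this
  have hmn : (fun x => (m : ℝ) * g x) = fun x => ((m : ℝ) / n) * f x := by
    funext x; simp only [hgdef]; ring
  have hmem : (fun x => (m : ℝ) * g x) ∈ L := by
    rw [hmn]
    refine hL.smul_mem f hf _ ⟨by positivity, ?_⟩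
    rw [div_le_one hn']
    exact_mod_cast hm
  have := aux_nat hL hI hg m hmem
  rw [hmn] at this
  rw [this, hIf]
  field_simp

end Aux

/-- A weak integration operator is homogeneous for scalars in
`[0,1]`: `I (r • f) = r * I f`. -/
theorem weakIntOp_smul (L : Set (X → ℝ)) (I : (X → ℝ) → ℝ)
    (hL : IsWeakIntLattice L) (hI : IsWeakIntOp L I)
    (f : X → ℝ) (hf : f ∈ L) (r : ℝ) (hr : r ∈ Set.Icc (0 : ℝ) 1) :
    I (fun x => r * f x) = r * I f := by
  obtain ⟨hr0, hr1⟩ := hr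
  rcases eq_or_lt_of_le hr1 with h1 | h1
  · subst h1; simp
  -- binary approximation
  set a : ℕ → ℤ := fun k => ⌊r * 2 ^ k⌋ with ha
  set s : ℕ → ℝ := fun k => (a k : ℝ) / 2 ^ k with hs
  have hpow : ∀ k : ℕ, (0 : ℝ) < 2 ^ k := fun k => by positivity
  have hs_le : ∀ k, s k ≤ r := by
    intro k
    rw [hs, div_le_iff₀ (hpow k)]
    exact Int.floor_le _
  have hs_gt : ∀ k, r - (1 / 2) ^ k < s k := by
    intro k
    have h := Int.lt_floor_add_one (r * 2 ^ k)
    rw [hs, lt_div_iff₀ (hpow k)]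
    have : (1 / 2 : ℝ) ^ k * 2 ^ k = 1 := by
      rw [← mul_pow]; norm_num
    nlinarith [hpow k]
  have ha0 : a 0 = 0 := by
    rw [ha]
    simp only [pow_zero, mul_one]
    exact Int.floor_eq_zero_iff.mpr ⟨hr0, h1⟩
  have hs0 : s 0 = 0 := by simp [hs, ha0]
  -- digits
  have hdig : ∀ k, 2 * a k ≤ a (k + 1) ∧ a (k + 1) ≤ 2 * a k + 1 := by
    intro k
    have hfl : (a k : ℝ) ≤ r * 2 ^ k := Int.floor_le _
    have hfu : r * 2 ^ k < a k + 1 := Int.lt_floor_add_one _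
    constructor
    · rw [ha]
      apply Int.le_floor.mpr
      push_cast
      rw [pow_succ]
      nlinarith
    · have h2 : (a (k + 1) : ℝ) ≤ r * 2 ^ (k + 1) := Int.floor_le _
      have : (a (k + 1) : ℝ) < 2 * a k + 2 := by
        rw [pow_succ] at h2; nlinarith
      have : a (k + 1) < 2 * a k + 2 := by exact_mod_cast this
      omega
  set m : ℕ → ℕ := fun k => (a (k + 1) - 2 * a k).toNat with hmdef
  have hm1 : ∀ k, m k ≤ 1 := by
    intro k
    have := hdig k
    simp only [hmdef]
    omega
  set d : ℕ → ℝ := fun k => s (k + 1) - s k with hd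
  have hdm : ∀ k, d k = (m k : ℝ) / 2 ^ (k + 1) := by
    intro k
    have hmc : ((m k : ℤ) : ℝ) = (a (k + 1) : ℝ) - 2 * a k := by
      have h := (hdig k).1
      rw [hmdef]
      push_cast [Int.toNat_of_nonneg (by omega : (0:ℤ) ≤ a (k+1) - 2 * a k)]
      ring
    push_cast at hmc
    rw [hd, hs, hmc, pow_succ]
    field_simp
    ring
  have hd_nonneg : ∀ k, 0 ≤ d k := by
    intro k
    rw [hdm k]
    positivity
  have hd01 : ∀ k, d k ∈ Set.Icc (0 : ℝ) 1 := by
    intro k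
    refine ⟨hd_nonneg k, ?_⟩
    rw [hdm k, div_le_one (hpow (k + 1))]
    calc ((m k : ℝ)) ≤ 1 := by exact_mod_cast hm1 k
      _ ≤ 2 ^ (k + 1) := by
        calc (1:ℝ) = 1 ^ (k+1) := (one_pow _).symm
          _ ≤ 2 ^ (k+1) := pow_le_pow_left₀ (by norm_num) (by norm_num) _
  -- HasSum d r
  have hds : HasSum d r := by
    rw [hasSum_iff_tendsto_nat_of_nonneg hd_nonneg]
    have hps : ∀ N : ℕ, ∑ i ∈ Finset.range N, d i = s N := by
      intro N
      rw [hd]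
      rw [Finset.sum_range_sub s, hs0, sub_zero]
    simp only [hps]
    have hlow : Filter.Tendsto (fun k : ℕ => r - (1 / 2 : ℝ) ^ k)
        Filter.atTop (nhds r) := by
      have := tendsto_pow_atTop_nhds_zero_of_lt_one (by norm_num : (0:ℝ) ≤ 1/2)
        (by norm_num : (1/2 : ℝ) < 1)
      simpa using (tendsto_const_nhds (x := r)).sub this
    exact tendsto_of_tendsto_of_tendsto_of_le_of_le hlow tendsto_const_nhds
      (fun k => le_of_lt (hs_gt k)) hs_le
  -- apply countable additivity
  set F : ℕ → X → ℝ := fun k x => d k * f x with hFdef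
  have hFL : ∀ k, F k ∈ L := fun k => hL.smul_mem f hf (d k) (hd01 k)
  have hFx : ∀ x, HasSum (fun k => F k x) (r * f x) := fun x =>
    hds.mul_right (f x)
  have hfun : (fun x => ∑' k, F k x) = fun x => r * f x :=
    funext fun x => (hFx x).tsum_eq
  have hsum := hI.countably_add F hFL (fun x => (hFx x).summable)
    (by rw [hfun]; exact hL.smul_mem f hf r ⟨hr0, hr1⟩)
  rw [hfun] at hsum
  have hIF : ∀ k, I (F k) = d k * I f := by
    intro k
    have h2 : ((2 ^ (k + 1) : ℕ) : ℝ) = (2 : ℝ) ^ (k + 1) := by push_cast; ring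
    have := aux_rat hL hI hf (m k) (2 ^ (k + 1)) (by positivity)
      (le_trans (hm1 k) (Nat.one_le_two_pow))
    rw [h2] at this
    have hFk : F k = fun x => ((m k : ℝ) / 2 ^ (k + 1)) * f x := by
      funext x; simp only [hFdef]; rw [hdm k]
    rw [hFk, this, ← hdm k]
  simp only [hIF] at hsum
  exact hsum.unique (hds.mul_right (I f))
end
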